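/- arXiv:1003.0495 — 8 statements merged into one kernel-verified Lean document; each statement's English description precedes it below -/
import Mathlib

section
/- Let k ≥ 0 be an integer and let S be a conical product rule of order k on the reference pyramid (built from two one-dimensional quadratures exact for polynomials of degree ≤ 2k+1 as in the stated hypotheses, with all points ζ_l ∈ [0,1)). Then for all integers a, b, c with 0 ≤ a, b, c ≤ 2k+1, the function p(ξ,η,ζ) = ξ^a η^b (1−ζ)^{c−a−b} (an integer power of (1−ζ), well defined for ζ < 1) satisfies S(p) = ∫_{K̂} p d(ξ,η,ζ), and this integral is finite. -/
open MeasureTheory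

noncomputable section

/-- The reference pyramid K̂ ⊂ ℝ³ (coordinates (ξ, η, ζ)). -/
def Khat : Set (ℝ × ℝ × ℝ) :=
  {p | 0 ≤ p.2.2 ∧ p.2.2 ≤ 1 ∧ 0 ≤ p.1 ∧ p.1 ≤ 1 - p.2.2 ∧ 0 ≤ p.2.1 ∧ p.2.1 ≤ 1 - p.2.2}

/-- The conical product quadrature rule on the reference pyramid. -/
def quadS {N M : ℕ} (xi lam : Fin N → ℝ) (ze mu : Fin M → ℝ) (f : ℝ × ℝ × ℝ → ℝ) : ℝ :=
  ∑ i, ∑ j, ∑ l, lam i * lam j * mu l * f (xi i * (1 - ze l), xi j * (1 - ze l), ze l)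

private lemma measurable_zpow_real (m : ℤ) : Measurable fun x : ℝ => x ^ m := by
  rcases m with n | n
  · simpa [zpow_natCast] using (measurable_id.pow_const n : Measurable fun x : ℝ => x ^ n)
  · have h : Measurable fun x : ℝ => (x ^ (n + 1))⁻¹ :=
      (measurable_id.pow_const (n + 1) : Measurable fun x : ℝ => x ^ (n+1)).inv
    simpa [zpow_negSucc] using h

private lemma measurableSet_Khat : MeasurableSet Khat := by
  simp only [Khat, Set.setOf_and]
  exact (measurableSet_le measurable_const (measurable_snd.comp measurable_snd)).inter
    ((measurableSet_le (measurable_snd.comp measurable_snd) measurable_const).inter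
    ((measurableSet_le measurable_const measurable_fst).inter
    ((measurableSet_le measurable_fst (measurable_const.sub (measurable_snd.comp measurable_snd))).inter
    ((measurableSet_le measurable_const (measurable_fst.comp measurable_snd)).inter
    (measurableSet_le (measurable_fst.comp measurable_snd) (measurable_const.sub (measurable_snd.comp measurable_snd)))))))

private lemma J_eq (n : ℕ) {t : ℝ} (ht : 0 ≤ t) :
    (∫ y, (Set.Icc (0:ℝ) t).indicator (fun y => y ^ n) y) = t ^ (n+1) / (n+1) := by
  rw [integral_indicator measurableSet_Icc, integral_Icc_eq_integral_Ioc,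
    ← intervalIntegral.integral_of_le ht, integral_pow]
  simp

private lemma pow_combine {t : ℝ} (ht : t ≠ 0) (a b c : ℕ) :
    t ^ ((c:ℤ) - a - b) * t ^ (a+1) * t ^ (b+1) = t ^ (c+2) := by
  rw [← zpow_natCast t (a+1), ← zpow_natCast t (b+1), ← zpow_natCast t (c+2),
    ← zpow_add₀ ht, ← zpow_add₀ ht]
  congr 1
  push_cast
  ring

private lemma pow_combine' {t : ℝ} (ht : t ≠ 0) (a b c : ℕ) :
    t ^ a * t ^ b * t ^ ((c:ℤ) - a - b) = t ^ c := by
  rw [← zpow_natCast t a, ← zpow_natCast t b, ← zpow_natCast t c,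
    ← zpow_add₀ ht, ← zpow_add₀ ht]
  congr 1
  push_cast
  ring

private lemma indicator_fact (a b c : ℕ) (x y z : ℝ) :
    Khat.indicator (fun p : ℝ×ℝ×ℝ => p.1 ^ a * p.2.1 ^ b * (1 - p.2.2) ^ ((c:ℤ) - a - b)) (x, y, z)
      = (Set.Icc (0:ℝ) 1).indicator (fun z => (1 - z) ^ ((c:ℤ) - a - b)) z *
        ((Set.Icc (0:ℝ) (1-z)).indicator (fun x => x ^ a) x *
         (Set.Icc (0:ℝ) (1-z)).indicator (fun y => y ^ b) y) := by
  simp only [Set.indicator_apply, Khat, Set.mem_setOf_eq, Set.mem_Icc]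
  split_ifs <;> first | tauto | ring

/-- the conical product rule of order k is exact for
p(ξ,η,ζ) = ξ^a η^b (1−ζ)^{c−a−b} whenever 0 ≤ a,b,c ≤ 2k+1, and the integral is finite. -/
theorem stmt_1 (k : ℕ) {N M : ℕ} (xi lam : Fin N → ℝ) (ze mu : Fin M → ℝ)
    (hze : ∀ l, ze l ∈ Set.Ico (0 : ℝ) 1)
    (hxi : ∀ g : Polynomial ℝ, g.natDegree ≤ 2 * k + 1 →
      ∑ i, lam i * g.eval (xi i) = ∫ x in (0:ℝ)..1, g.eval x)
    (hmu : ∀ h : Polynomial ℝ, h.natDegree ≤ 2 * k + 1 →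
      ∑ l, mu l * h.eval (ze l) = ∫ z in (0:ℝ)..1, (1 - z) ^ 2 * h.eval z)
    (a b c : ℕ) (ha : a ≤ 2 * k + 1) (hb : b ≤ 2 * k + 1) (hc : c ≤ 2 * k + 1) :
    IntegrableOn
      (fun p : ℝ × ℝ × ℝ => p.1 ^ a * p.2.1 ^ b * (1 - p.2.2) ^ ((c : ℤ) - a - b))
      Khat volume ∧
    quadS xi lam ze mu
        (fun p : ℝ × ℝ × ℝ => p.1 ^ a * p.2.1 ^ b * (1 - p.2.2) ^ ((c : ℤ) - a - b)) =
      ∫ p in Khat, p.1 ^ a * p.2.1 ^ b * (1 - p.2.2) ^ ((c : ℤ) - a - b) := by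
  set f : ℝ × ℝ × ℝ → ℝ :=
    fun p => p.1 ^ a * p.2.1 ^ b * (1 - p.2.2) ^ ((c : ℤ) - a - b) with hf
  have hfm : Measurable f :=
    ((measurable_fst.pow_const a).mul ((measurable_fst.comp measurable_snd).pow_const b)).mul
      ((measurable_zpow_real _).comp (measurable_const.sub (measurable_snd.comp measurable_snd)))
  -- bound on Khat
  have hbd : ∀ p ∈ Khat, ‖f p‖ ≤ 1 := by
    rintro ⟨x, y, z⟩ ⟨hz0, hz1, hx0, hx1, hy0, hy1⟩
    simp only [hf, Real.norm_eq_abs]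
    rcases eq_or_lt_of_le hz1 with hz | hz
    · have hx : x = 0 := le_antisymm (by rw [← hz] at hx1; linarith) hx0
      have hy : y = 0 := le_antisymm (by rw [← hz] at hy1; linarith) hy0
      have h1z : (1 : ℝ) - z = 0 := by rw [← hz]; ring
      subst hx; subst hy
      rw [h1z, abs_mul, abs_mul]
      have h01 : ∀ n : ℕ, |(0:ℝ) ^ n| ≤ 1 := by
        intro n
        rcases Nat.eq_zero_or_pos n with h | h
        · simp [h]
        · simp [zero_pow h.ne']
      have h02 : |(0:ℝ) ^ ((c:ℤ) - a - b)| ≤ 1 := by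
        rcases eq_or_ne ((c:ℤ) - a - b) 0 with h | h
        · simp [h]
        · simp [zero_zpow _ h]
      exact mul_le_one₀ (mul_le_one₀ (h01 a) (abs_nonneg _) (h01 b)) (abs_nonneg _) h02
    · have ht : (0:ℝ) < 1 - z := by linarith
      have h1 : (0:ℝ) ≤ x ^ a * y ^ b * (1 - z) ^ ((c:ℤ) - a - b) := by positivity
      rw [abs_of_nonneg h1]
      calc x ^ a * y ^ b * (1 - z) ^ ((c:ℤ) - a - b)
          ≤ (1-z) ^ a * (1-z) ^ b * (1 - z) ^ ((c:ℤ) - a - b) := by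
            gcongr <;> first | exact hx0 | exact hy0 | assumption | exact le_rfl
        _ = (1-z) ^ c := pow_combine' ht.ne' a b c
        _ ≤ 1 := pow_le_one₀ ht.le (by linarith)
  -- finite measure
  have hsub : Khat ⊆ (Set.Icc (0:ℝ) 1) ×ˢ ((Set.Icc (0:ℝ) 1) ×ˢ (Set.Icc (0:ℝ) 1)) := by
    rintro ⟨x, y, z⟩ ⟨hz0, hz1, hx0, hx1, hy0, hy1⟩
    exact ⟨⟨hx0, by linarith⟩, ⟨hy0, by linarith⟩, hz0, hz1⟩
  have hKfin : volume Khat ≠ ⊤ := by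
    refine ne_top_of_le_ne_top ?_ (measure_mono hsub)
    exact ((isCompact_Icc (a := (0:ℝ)) (b := 1)).prod
        ((isCompact_Icc (a := (0:ℝ)) (b := 1)).prod
          (isCompact_Icc (a := (0:ℝ)) (b := 1)))).measure_lt_top.ne
  have hInt : IntegrableOn f Khat volume :=
    Measure.integrableOn_of_bounded hKfin hfm.aestronglyMeasurable
      ((ae_restrict_iff' measurableSet_Khat).2 (ae_of_all _ hbd))
  refine ⟨hInt, ?_⟩
  -- positivity of nodes' complement
  have hzel : ∀ l, (0:ℝ) < 1 - ze l := fun l => by have := (hze l).2; linarith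
  -- 1D quadrature values
  have hA : ∀ n : ℕ, n ≤ 2*k+1 → (∑ i, lam i * xi i ^ n) = 1 / ((n:ℝ)+1) := by
    intro n hn
    have h := hxi (Polynomial.X ^ n) (by simpa [Polynomial.natDegree_X_pow] using hn)
    simp only [Polynomial.eval_pow, Polynomial.eval_X] at h
    rw [h, integral_pow]
    simp
  have hC : (∑ l, mu l * (1 - ze l) ^ c) = 1 / ((c:ℝ)+3) := by
    have hdeg : ((1 - Polynomial.X : Polynomial ℝ) ^ c).natDegree ≤ 2*k+1 := by
      refine le_trans (Polynomial.natDegree_pow_le) ?_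
      have h1 : (1 - Polynomial.X : Polynomial ℝ).natDegree ≤ 1 := by
        refine le_trans (Polynomial.natDegree_sub_le _ _) ?_
        simp
      calc c * (1 - Polynomial.X : Polynomial ℝ).natDegree ≤ c * 1 := Nat.mul_le_mul_left _ h1
        _ ≤ 2*k+1 := by omega
    have h := hmu ((1 - Polynomial.X) ^ c) hdeg
    simp only [Polynomial.eval_pow, Polynomial.eval_sub, Polynomial.eval_one,
      Polynomial.eval_X] at h
    rw [h]
    have h2 : ∀ z : ℝ, (1-z)^2 * (1-z)^c = (1-z)^(c+2) := fun z => by rw [pow_add]; ring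
    rw [intervalIntegral.integral_congr (fun z _ => h2 z)]
    have h3 := intervalIntegral.integral_comp_sub_left (a := (0:ℝ)) (b := 1)
      (fun u : ℝ => u ^ (c+2)) 1
    norm_num at h3
    rw [h3, show ((c:ℝ)+2+1) = (c:ℝ)+3 by ring, one_div]
  -- quadrature factorization
  have hquad : quadS xi lam ze mu f
      = (∑ i, lam i * xi i ^ a) * ((∑ j, lam j * xi j ^ b) * (∑ l, mu l * (1 - ze l) ^ c)) := by
    have hterm : ∀ i j l, lam i * lam j * mu l * f (xi i * (1 - ze l), xi j * (1 - ze l), ze l)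
        = (lam i * xi i ^ a) * ((lam j * xi j ^ b) * (mu l * (1 - ze l) ^ c)) := by
      intro i j l
      have key := pow_combine' (hzel l).ne' a b c
      simp only [hf]
      rw [mul_pow, mul_pow]
      calc lam i * lam j * mu l
            * (xi i ^ a * (1 - ze l) ^ a * (xi j ^ b * (1 - ze l) ^ b) * (1 - ze l) ^ ((c:ℤ)-a-b))
          = (lam i * xi i ^ a) * ((lam j * xi j ^ b)
              * (mu l * ((1-ze l)^a * (1-ze l)^b * (1-ze l)^((c:ℤ)-a-b)))) := by ring
        _ = _ := by rw [key]
    calc quadS xi lam ze mu f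
        = ∑ i, ∑ j, ∑ l, (lam i * xi i ^ a) * ((lam j * xi j ^ b) * (mu l * (1 - ze l) ^ c)) :=
          Finset.sum_congr rfl fun i _ => Finset.sum_congr rfl fun j _ =>
            Finset.sum_congr rfl fun l _ => hterm i j l
      _ = _ := by simp only [← Finset.mul_sum, ← Finset.sum_mul]
  -- the measure-preserving coordinate rotation
  set σ : (ℝ × ℝ × ℝ) ≃ᵐ (ℝ × ℝ × ℝ) :=
    ((MeasurableEquiv.prodComm : (ℝ × (ℝ × ℝ)) ≃ᵐ ((ℝ × ℝ) × ℝ))).trans MeasurableEquiv.prodAssoc with hσdef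
  have hσ : MeasurePreserving (⇑σ) volume volume := by
    have h1 : MeasurePreserving (Prod.swap : ℝ × (ℝ×ℝ) → (ℝ×ℝ) × ℝ)
        ((volume : Measure ℝ).prod (volume : Measure (ℝ×ℝ)))
        ((volume : Measure (ℝ×ℝ)).prod (volume : Measure ℝ)) := Measure.measurePreserving_swap
    have h2 := MeasureTheory.measurePreserving_prodAssoc (volume : Measure ℝ) (volume : Measure ℝ)
      (volume : Measure ℝ)
    exact h2.comp h1
  have hFind : Integrable (Khat.indicator f) volume := hInt.integrable_indicator measurableSet_Khat
  have hG : Integrable ((Khat.indicator f) ∘ ⇑σ) volume :=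
    (hσ.integrable_comp_emb σ.measurableEmbedding).2 hFind
  set Φ : ℝ → ℝ := fun z => (1-z) ^ ((c:ℤ)-a-b)
      * ((1-z)^(a+1)/((a:ℝ)+1) * ((1-z)^(b+1)/((b:ℝ)+1))) with hΦ
  have hzint : ∀ z : ℝ, (∫ w : ℝ × ℝ, ((Khat.indicator f) ∘ ⇑σ) (z, w))
      = (Set.Icc (0:ℝ) 1).indicator Φ z := by
    intro z
    have hrw : ∀ w : ℝ × ℝ, ((Khat.indicator f) ∘ ⇑σ) (z, w)
        = (Set.Icc (0:ℝ) 1).indicator (fun z => (1 - z) ^ ((c:ℤ) - a - b)) z *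
          ((Set.Icc (0:ℝ) (1-z)).indicator (fun x => x ^ a) w.1 *
           (Set.Icc (0:ℝ) (1-z)).indicator (fun y => y ^ b) w.2) :=
      fun w => indicator_fact a b c w.1 w.2 z
    by_cases hz : z ∈ Set.Icc (0:ℝ) 1
    · have ht : (0:ℝ) ≤ 1 - z := by
        rw [Set.mem_Icc] at hz
        linarith [hz.2]
      simp only [hrw, Set.indicator_of_mem hz]
      rw [integral_const_mul, Measure.volume_eq_prod, integral_prod_mul, J_eq a ht, J_eq b ht]
    · simp only [hrw, Set.indicator_of_notMem hz, zero_mul, integral_zero]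
  have hEq : Set.EqOn Φ (fun z => (1-z)^(c+2) * (1/((a:ℝ)+1) * (1/((b:ℝ)+1)))) (Set.Ioo 0 1) := by
    intro z hz
    rw [Set.mem_Ioo] at hz
    have ht : (0:ℝ) < 1 - z := by linarith [hz.2]
    have key := pow_combine ht.ne' a b c
    show (1-z) ^ ((c:ℤ)-a-b) * ((1-z)^(a+1)/((a:ℝ)+1) * ((1-z)^(b+1)/((b:ℝ)+1)))
      = (1-z)^(c+2) * (1/((a:ℝ)+1) * (1/((b:ℝ)+1)))
    calc (1-z) ^ ((c:ℤ)-a-b) * ((1-z)^(a+1)/((a:ℝ)+1) * ((1-z)^(b+1)/((b:ℝ)+1)))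
        = ((1-z) ^ ((c:ℤ)-a-b) * (1-z)^(a+1) * (1-z)^(b+1)) * (1/((a:ℝ)+1) * (1/((b:ℝ)+1))) := by
          ring
      _ = _ := by rw [key]
  have hlast : (∫ z in Set.Ioo (0:ℝ) 1, (1-z)^(c+2)) = 1 / ((c:ℝ)+3) := by
    rw [← integral_Ioc_eq_integral_Ioo, ← intervalIntegral.integral_of_le zero_le_one]
    have h3 := intervalIntegral.integral_comp_sub_left (a := (0:ℝ)) (b := 1)
      (fun u : ℝ => u ^ (c+2)) 1
    norm_num at h3
    rw [h3, show ((c:ℝ)+2+1) = (c:ℝ)+3 by ring, one_div]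
  have hval : (∫ p in Khat, f p) = 1 / ((c:ℝ)+3) * (1/((a:ℝ)+1) * (1/((b:ℝ)+1))) := by
    calc (∫ p in Khat, f p) = ∫ p, Khat.indicator f p := (integral_indicator measurableSet_Khat).symm
      _ = ∫ q, ((Khat.indicator f) ∘ ⇑σ) q := (hσ.integral_comp σ.measurableEmbedding _).symm
      _ = ∫ z, ∫ w : ℝ × ℝ, ((Khat.indicator f) ∘ ⇑σ) (z, w) := by
          rw [Measure.volume_eq_prod]
          exact integral_prod _ (by rwa [Measure.volume_eq_prod] at hG)
      _ = ∫ z, (Set.Icc (0:ℝ) 1).indicator Φ z := by simp only [hzint]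
      _ = ∫ z in Set.Icc (0:ℝ) 1, Φ z := integral_indicator measurableSet_Icc
      _ = ∫ z in Set.Ioo (0:ℝ) 1, Φ z := by
          rw [integral_Icc_eq_integral_Ioc, integral_Ioc_eq_integral_Ioo]
      _ = ∫ z in Set.Ioo (0:ℝ) 1, (1-z)^(c+2) * (1/((a:ℝ)+1) * (1/((b:ℝ)+1))) :=
          setIntegral_congr_fun measurableSet_Ioo hEq
      _ = (∫ z in Set.Ioo (0:ℝ) 1, (1-z)^(c+2)) * (1/((a:ℝ)+1) * (1/((b:ℝ)+1))) :=
          integral_mul_const _ _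
      _ = _ := by rw [hlast]
  rw [hquad, hA a ha, hA b hb, hC, hval]
  ring
end
end

section
/- Let k ≥ 1 be an integer and let S be a conical product rule of order k on the reference pyramid (built from two one-dimensional quadratures exact for polynomials of degree ≤ 2k+1 as in the stated hypotheses, with all points ζ_l ∈ [0,1)). Let ũ = (ũ₁,ũ₂,ũ₃) and ṽ = (ṽ₁,ṽ₂,ṽ₃) be elements of the H(curl)-underlying space U^{(1)}_k (triples of functions on K∞), and let A ∈ ℝ^{3×3} be a constant matrix. Define û = (û₁,û₂,û₃) on K̂ ∖ {ζ=1} by (û₁,û₂,û₃)(φ(x,y,z)) = (1+z)·(ũ₁(x,y,z), ũ₂(x,y,z), x·ũ₁(x,y,z) + y·ũ₂(x,y,z) + (1+z)·ũ₃(x,y,z)), and likewise v̂ from ṽ. Then the function F = ∑_{i,j=1}^{3} A_{ij} ûᵢ v̂ⱼ is Lebesgue integrable on K̂ and S(F) = ∫_{K̂} F. -/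
/-!
The Duffy map `(x, y, z) ↦ (x (1 - z), y (1 - z), z)` sends the unit cube (minus its top face)
bijectively onto the pyramid minus its apex, with Jacobian `(1 - z) ^ 2`; the conical product rule
is exactly the tensor product rule on the cube for this weight. Pulled back through the Duffy map
and `φ⁻¹`, the rational factors `(1 + z)⁻ᵏ` of `U^{(1)}_k` become powers of `1 - z`, so every
component of `û` is a polynomial of degree at most `k` in each variable separately. Hence `F`
pulls back to a polynomial of degree at most `2k` in each variable, which the tensor product of
the two one-dimensional rules integrates exactly.
-/

open MeasureTheory

noncomputable section

/-- The k-weighted tensor product polynomial space Q_k^{l,m,n}: the span of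
(x,y,z) ↦ x^a y^b z^c / (1+z)^k for 0 ≤ a ≤ l, 0 ≤ b ≤ m, 0 ≤ c ≤ n. -/
def Qspace (k : ℕ) (l m n : ℤ) : Submodule ℝ ((ℝ × ℝ × ℝ) → ℝ) :=
  Submodule.span ℝ {f | ∃ a b c : ℕ, (a : ℤ) ≤ l ∧ (b : ℤ) ≤ m ∧ (c : ℤ) ≤ n ∧
    f = fun p => p.1 ^ a * p.2.1 ^ b * p.2.2 ^ c / (1 + p.2.2) ^ k}

/-- The inverse of the projective map φ: (ξ,η,ζ) ↦ (ξ/(1−ζ), η/(1−ζ), ζ/(1−ζ)). -/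
def phiInv (p : ℝ × ℝ × ℝ) : ℝ × ℝ × ℝ :=
  (p.1 / (1 - p.2.2), p.2.1 / (1 - p.2.2), p.2.2 / (1 - p.2.2))

/-- Membership in the H(curl)-underlying space U^{(1)}_k: ũ = p̃ +
(z^{k−1}/(1+z)^{k+1})·(z·∂r/∂x, z·∂r/∂y, −r) with
p̃ ∈ Q_{k+1}^{k−1,k,k−1} × Q_{k+1}^{k,k−1,k−1} × Q_{k+1}^{k,k,k−2} and r a polynomial
of degree ≤ k in each of x and y. -/
def U1mem (k : ℕ) (u1 u2 u3 : (ℝ × ℝ × ℝ) → ℝ) : Prop :=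
  ∃ p1 ∈ Qspace (k + 1) ((k : ℤ) - 1) k ((k : ℤ) - 1),
  ∃ p2 ∈ Qspace (k + 1) k ((k : ℤ) - 1) ((k : ℤ) - 1),
  ∃ p3 ∈ Qspace (k + 1) k k ((k : ℤ) - 2),
  ∃ r : MvPolynomial (Fin 2) ℝ, r.degreeOf 0 ≤ k ∧ r.degreeOf 1 ≤ k ∧
    (u1 = fun p => p1 p + p.2.2 ^ (k - 1) / (1 + p.2.2) ^ (k + 1) *
        (p.2.2 * MvPolynomial.eval ![p.1, p.2.1] (MvPolynomial.pderiv 0 r))) ∧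
    (u2 = fun p => p2 p + p.2.2 ^ (k - 1) / (1 + p.2.2) ^ (k + 1) *
        (p.2.2 * MvPolynomial.eval ![p.1, p.2.1] (MvPolynomial.pderiv 1 r))) ∧
    (u3 = fun p => p3 p + p.2.2 ^ (k - 1) / (1 + p.2.2) ^ (k + 1) *
        (-(MvPolynomial.eval ![p.1, p.2.1] r)))

open Set Polynomial

theorem natDegree_X_pow_mul_one_sub_X_pow_le {R : Type*} [CommRing R] (c e : ℕ) :
    ((X : R[X]) ^ c * (1 - X) ^ e).natDegree ≤ c + e := by
  refine natDegree_mul_le.trans (add_le_add (natDegree_X_pow_le c) ?_)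
  simpa using natDegree_pow_le_of_le e (show (1 - X : R[X]).natDegree ≤ 1 by compute_degree)

namespace MvPolynomial

variable {R σ : Type*} [CommSemiring R]

theorem exists_mem_support_of_mem_support_pderiv {i : σ} {r : MvPolynomial σ R} {m : σ →₀ ℕ}
    (hm : m ∈ (pderiv i r).support) :
    ∃ n ∈ r.support, m = n - Finsupp.single i 1 := by
  classical
  rw [r.as_sum, map_sum] at hm
  obtain ⟨n, hn, hmn⟩ := Finset.mem_biUnion.1 (support_sum hm)
  rw [pderiv_monomial] at hmn
  exact ⟨n, hn, Finset.mem_singleton.1 (support_monomial_subset hmn)⟩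

theorem degreeOf_pderiv_le (i j : σ) (r : MvPolynomial σ R) :
    (pderiv i r).degreeOf j ≤ r.degreeOf j := by
  refine (degreeOf_le_iff).2 fun m hm => ?_
  obtain ⟨n, hn, rfl⟩ := exists_mem_support_of_mem_support_pderiv hm
  exact (tsub_le_self : _ - _ ≤ n j).trans (monomial_le_degreeOf j hn)

theorem degreeOf_pderiv_self_le (i : σ) (r : MvPolynomial σ R) :
    (pderiv i r).degreeOf i ≤ r.degreeOf i - 1 := by
  refine (degreeOf_le_iff).2 fun m hm => ?_
  obtain ⟨n, hn, rfl⟩ := exists_mem_support_of_mem_support_pderiv hm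
  simpa using Nat.sub_le_sub_right (monomial_le_degreeOf i hn) 1

end MvPolynomial

def TensorPoly (d₁ d₂ d₃ : ℕ) : Submodule ℝ (ℝ × ℝ × ℝ → ℝ) :=
  Submodule.span ℝ {G | ∃ f g h : ℝ[X], f.natDegree ≤ d₁ ∧ g.natDegree ≤ d₂ ∧ h.natDegree ≤ d₃ ∧
    G = fun p => f.eval p.1 * g.eval p.2.1 * h.eval p.2.2}

namespace TensorPoly

variable {d₁ d₂ d₃ e₁ e₂ e₃ : ℕ}

theorem eval_mem {f g h : ℝ[X]} (hf : f.natDegree ≤ d₁) (hg : g.natDegree ≤ d₂)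
    (hh : h.natDegree ≤ d₃) :
    (fun p : ℝ × ℝ × ℝ => f.eval p.1 * g.eval p.2.1 * h.eval p.2.2) ∈ TensorPoly d₁ d₂ d₃ :=
  Submodule.subset_span ⟨f, g, h, hf, hg, hh, rfl⟩

theorem mono (h₁ : d₁ ≤ e₁) (h₂ : d₂ ≤ e₂) (h₃ : d₃ ≤ e₃) :
    TensorPoly d₁ d₂ d₃ ≤ TensorPoly e₁ e₂ e₃ :=
  Submodule.span_mono fun _ ⟨f, g, h, hf, hg, hh, hG⟩ =>
    ⟨f, g, h, hf.trans h₁, hg.trans h₂, hh.trans h₃, hG⟩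

theorem mul_mem {F G : ℝ × ℝ × ℝ → ℝ} (hF : F ∈ TensorPoly d₁ d₂ d₃)
    (hG : G ∈ TensorPoly e₁ e₂ e₃) : F * G ∈ TensorPoly (d₁ + e₁) (d₂ + e₂) (d₃ + e₃) := by
  have hFG := Submodule.mul_mem_mul hF hG
  rw [TensorPoly, TensorPoly, Submodule.span_mul_span] at hFG
  refine Submodule.span_mono ?_ hFG
  rintro _ ⟨_, ⟨f, g, h, hf, hg, hh, rfl⟩, _, ⟨f', g', h', hf', hg', hh', rfl⟩, rfl⟩
  refine ⟨f * f', g * g', h * h', natDegree_mul_le.trans (add_le_add hf hf'),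
    natDegree_mul_le.trans (add_le_add hg hg'), natDegree_mul_le.trans (add_le_add hh hh'), ?_⟩
  ext p
  simp only [Pi.mul_apply, eval_mul]
  ring

theorem continuous {F : ℝ × ℝ × ℝ → ℝ} (hF : F ∈ TensorPoly d₁ d₂ d₃) : Continuous F := by
  induction hF using Submodule.span_induction with
  | mem F hF =>
    obtain ⟨f, g, h, -, -, -, rfl⟩ := hF
    fun_prop
  | zero => exact continuous_zero
  | add F G _ _ hF hG => exact hF.add hG
  | smul t F _ hF => exact hF.const_smul t

theorem fst_mem : (fun p : ℝ × ℝ × ℝ => p.1) ∈ TensorPoly 1 0 0 := by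
  simpa using eval_mem (f := X) (g := 1) (h := 1) natDegree_X_le (by simp) (by simp)

theorem fst_snd_mem : (fun p : ℝ × ℝ × ℝ => p.2.1) ∈ TensorPoly 0 1 0 := by
  simpa using eval_mem (f := 1) (g := X) (h := 1) (by simp) natDegree_X_le (by simp)

theorem eval_mul_pow_mem {q : MvPolynomial (Fin 2) ℝ} {c : ℕ}
    (h₁ : q.degreeOf 0 ≤ d₁) (h₂ : q.degreeOf 1 ≤ d₂) (hc : c ≤ d₃) :
    (fun p : ℝ × ℝ × ℝ => MvPolynomial.eval ![p.1, p.2.1] q * p.2.2 ^ c) ∈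
      TensorPoly d₁ d₂ d₃ := by
  have hq : (fun p : ℝ × ℝ × ℝ => MvPolynomial.eval ![p.1, p.2.1] q * p.2.2 ^ c) =
      ∑ m ∈ q.support, q.coeff m •
        fun p : ℝ × ℝ × ℝ => (X ^ m 0).eval p.1 * (X ^ m 1).eval p.2.1 * (X ^ c).eval p.2.2 := by
    ext p
    simp [MvPolynomial.eval_eq', Finset.sum_mul, mul_assoc]
  rw [hq]
  refine Submodule.sum_mem _ fun m hm => Submodule.smul_mem _ _ (eval_mem ?_ ?_ ?_)
  · exact (natDegree_X_pow_le _).trans ((MvPolynomial.monomial_le_degreeOf 0 hm).trans h₁)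
  · exact (natDegree_X_pow_le _).trans ((MvPolynomial.monomial_le_degreeOf 1 hm).trans h₂)
  · exact (natDegree_X_pow_le _).trans hc

end TensorPoly

theorem one_add_div_one_sub {z : ℝ} (hz : z ≠ 1) : 1 + z / (1 - z) = (1 - z)⁻¹ := by
  field_simp [sub_ne_zero.2 hz.symm]
  ring

theorem Qspace.exists_tensorPoly_pullback {K t d₁ d₂ : ℕ} {l m n : ℤ} (hl : l ≤ d₁)
    (hm : m ≤ d₂) (hn : n + t ≤ K) {f : ℝ × ℝ × ℝ → ℝ} (hf : f ∈ Qspace K l m n) :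
    ∃ G ∈ TensorPoly d₁ d₂ (K - t), ∀ x y z : ℝ, z ≠ 1 →
      (1 - z)⁻¹ ^ t * f (x, y, z / (1 - z)) = G (x, y, z) := by
  induction hf using Submodule.span_induction with
  | mem f hf =>
    obtain ⟨a, b, c, ha, hb, hc, rfl⟩ := hf
    obtain ⟨e, rfl⟩ : ∃ e, K = c + t + e := ⟨K - c - t, by omega⟩
    refine ⟨_, TensorPoly.eval_mem (f := X ^ a) (g := X ^ b) (h := X ^ c * (1 - X) ^ e)
      ((natDegree_X_pow_le a).trans (by omega)) ((natDegree_X_pow_le b).trans (by omega))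
      ((natDegree_X_pow_mul_one_sub_X_pow_le c e).trans (by omega)), fun x y z hz => ?_⟩
    have hz' : 1 - z ≠ 0 := sub_ne_zero.2 hz.symm
    simp only [eval_pow, eval_X, eval_mul, eval_sub, eval_one]
    rw [one_add_div_one_sub hz, div_pow, inv_pow, inv_pow, pow_add, pow_add]
    field_simp
  | zero => exact ⟨0, Submodule.zero_mem _, fun _ _ _ _ => by simp⟩
  | add f g _ _ hf hg =>
    obtain ⟨F, hF, hfF⟩ := hf
    obtain ⟨G, hG, hgG⟩ := hg
    refine ⟨F + G, Submodule.add_mem _ hF hG, fun x y z hz => ?_⟩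
    simp only [Pi.add_apply, mul_add, hfF x y z hz, hgG x y z hz]
  | smul s f _ hf =>
    obtain ⟨F, hF, hfF⟩ := hf
    refine ⟨s • F, Submodule.smul_mem _ _ hF, fun x y z hz => ?_⟩
    simp only [Pi.smul_apply, smul_eq_mul, mul_left_comm, hfF x y z hz]

theorem U1mem.exists_tensorPoly_pullback {k : ℕ} (hk : 1 ≤ k) {u₁ u₂ u₃ : ℝ × ℝ × ℝ → ℝ}
    (hu : U1mem k u₁ u₂ u₃) :
    ∃ G₁ ∈ TensorPoly (k - 1) k k, ∃ G₂ ∈ TensorPoly k (k - 1) k, ∃ G₃ ∈ TensorPoly k k k,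
      ∀ x y z : ℝ, z ≠ 1 →
        (1 - z)⁻¹ * u₁ (x, y, z / (1 - z)) = G₁ (x, y, z) ∧
        (1 - z)⁻¹ * u₂ (x, y, z / (1 - z)) = G₂ (x, y, z) ∧
        (1 - z)⁻¹ ^ 2 * u₃ (x, y, z / (1 - z)) = G₃ (x, y, z) := by
  obtain ⟨k, rfl⟩ : ∃ k', k = k' + 1 := ⟨k - 1, by omega⟩
  obtain ⟨p₁, hp₁, p₂, hp₂, p₃, hp₃, r, hr₀, hr₁, rfl, rfl, rfl⟩ := hu
  obtain ⟨P₁, hP₁, hp₁⟩ := Qspace.exists_tensorPoly_pullback (t := 1) (d₁ := k) (d₂ := k + 1)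
    (by push_cast; omega) le_rfl (by push_cast; omega) hp₁
  obtain ⟨P₂, hP₂, hp₂⟩ := Qspace.exists_tensorPoly_pullback (t := 1) (d₁ := k + 1) (d₂ := k)
    le_rfl (by push_cast; omega) (by push_cast; omega) hp₂
  obtain ⟨P₃, hP₃, hp₃⟩ := Qspace.exists_tensorPoly_pullback (t := 2) (d₁ := k + 1)
    (d₂ := k + 1) le_rfl le_rfl (by push_cast; omega) hp₃
  have hR₁ := TensorPoly.eval_mul_pow_mem (d₁ := k) (c := k + 1) (d₃ := k + 1)
    ((MvPolynomial.degreeOf_pderiv_self_le 0 r).trans (by omega))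
    ((MvPolynomial.degreeOf_pderiv_le 0 1 r).trans hr₁) le_rfl
  have hR₂ := TensorPoly.eval_mul_pow_mem (d₂ := k) (c := k + 1) (d₃ := k + 1)
    ((MvPolynomial.degreeOf_pderiv_le 1 0 r).trans hr₀)
    ((MvPolynomial.degreeOf_pderiv_self_le 1 r).trans (by omega)) le_rfl
  have hR₃ := TensorPoly.eval_mul_pow_mem (c := k) (d₃ := k + 1) hr₀ hr₁ k.le_succ
  simp only [pow_one] at hp₁ hp₂
  have hweight : ∀ z : ℝ, z ≠ 1 →
      (z / (1 - z)) ^ (k + 1 - 1) / (1 + z / (1 - z)) ^ (k + 1 + 1) = z ^ k * (1 - z) ^ 2 := by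
    intro z hz
    rw [Nat.add_sub_cancel, one_add_div_one_sub hz, div_pow, inv_pow]
    field_simp [sub_ne_zero.2 hz.symm]
    ring
  refine ⟨_, Submodule.add_mem _ hP₁ hR₁, _, Submodule.add_mem _ hP₂ hR₂, _,
    Submodule.sub_mem _ (TensorPoly.mono le_rfl le_rfl k.le_succ hP₃) hR₃,
    fun x y z hz => ⟨?_, ?_, ?_⟩⟩ <;>
  · have hz' : 1 - z ≠ 0 := sub_ne_zero.2 hz.symm
    simp only [Pi.add_apply, Pi.sub_apply, mul_add, ← hp₁ x y z hz, ← hp₂ x y z hz,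
      ← hp₃ x y z hz, hweight z hz]
    field_simp
    ring

def duffy (p : ℝ × ℝ × ℝ) : ℝ × ℝ × ℝ := (p.1 * (1 - p.2.2), p.2.1 * (1 - p.2.2), p.2.2)

theorem phiInv_duffy (x y : ℝ) {z : ℝ} (hz : z ≠ 1) :
    phiInv (duffy (x, y, z)) = (x, y, z / (1 - z)) := by
  simp [phiInv, duffy, sub_ne_zero.2 hz.symm]

theorem U1mem.exists_tensorPoly_covariant_comp_duffy {k : ℕ} (hk : 1 ≤ k)
    {u₁ u₂ u₃ : ℝ × ℝ × ℝ → ℝ} (hu : U1mem k u₁ u₂ u₃) {uh : Fin 3 → ℝ × ℝ × ℝ → ℝ}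
    (huh : ∀ p : ℝ × ℝ × ℝ, p.2.2 ≠ 1 →
      uh 0 p = (1 + (phiInv p).2.2) * u₁ (phiInv p) ∧
      uh 1 p = (1 + (phiInv p).2.2) * u₂ (phiInv p) ∧
      uh 2 p = (1 + (phiInv p).2.2) *
        ((phiInv p).1 * u₁ (phiInv p) + (phiInv p).2.1 * u₂ (phiInv p) +
          (1 + (phiInv p).2.2) * u₃ (phiInv p))) :
    ∃ G : Fin 3 → ℝ × ℝ × ℝ → ℝ, (∀ i, G i ∈ TensorPoly k k k) ∧
      ∀ i p, p.2.2 ≠ 1 → uh i (duffy p) = G i p := by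
  obtain ⟨G₁, hG₁, G₂, hG₂, G₃, hG₃, hG⟩ := hu.exists_tensorPoly_pullback hk
  have hxG₁ := TensorPoly.mul_mem TensorPoly.fst_mem hG₁
  have hyG₂ := TensorPoly.mul_mem TensorPoly.fst_snd_mem hG₂
  refine ⟨![G₁, G₂, (fun p => p.1) * G₁ + (fun p => p.2.1) * G₂ + G₃], ?_, ?_⟩
  · intro i
    fin_cases i
    · exact TensorPoly.mono (by omega) le_rfl le_rfl hG₁
    · exact TensorPoly.mono le_rfl (by omega) le_rfl hG₂
    · refine Submodule.add_mem _ (Submodule.add_mem _ ?_ ?_) hG₃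
      · exact TensorPoly.mono (by omega) (by omega) (by omega) hxG₁
      · exact TensorPoly.mono (by omega) (by omega) (by omega) hyG₂
  · rintro i ⟨x, y, z⟩ (hz : z ≠ 1)
    obtain ⟨h₀, h₁, h₂⟩ := huh (duffy (x, y, z)) hz
    obtain ⟨e₁, e₂, e₃⟩ := hG x y z hz
    rw [phiInv_duffy x y hz, one_add_div_one_sub hz] at h₀ h₁ h₂
    fin_cases i
    · exact h₀.trans e₁
    · exact h₁.trans e₂
    · simp only [h₂, Fin.reduceFinMk, Matrix.cons_val, Pi.add_apply, Pi.mul_apply, ← e₁, ← e₂, ← e₃]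
      ring

def duffyDeriv (p : ℝ × ℝ × ℝ) : (ℝ × ℝ × ℝ) →L[ℝ] ℝ × ℝ × ℝ :=
  LinearMap.toContinuousLinearMap
    { toFun := fun v =>
        ((1 - p.2.2) * v.1 - p.1 * v.2.2, (1 - p.2.2) * v.2.1 - p.2.1 * v.2.2, v.2.2)
      map_add' := fun v w => by ext <;> simp <;> ring
      map_smul' := fun c v => by ext <;> simp <;> ring }

theorem hasFDerivAt_duffy (p : ℝ × ℝ × ℝ) : HasFDerivAt duffy (duffyDeriv p) p := by
  have hx : HasFDerivAt (fun q : ℝ × ℝ × ℝ => q.1) _ p := hasFDerivAt_fst (𝕜 := ℝ)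
  have hy : HasFDerivAt (fun q : ℝ × ℝ × ℝ => q.2.1) _ p := (hasFDerivAt_snd (𝕜 := ℝ)).fst
  have hz : HasFDerivAt (fun q : ℝ × ℝ × ℝ => q.2.2) _ p := (hasFDerivAt_snd (𝕜 := ℝ)).snd
  have hw := (hasFDerivAt_const (1 : ℝ) p).sub hz
  refine ((hx.mul hw).prodMk ((hy.mul hw).prodMk hz)).congr_fderiv ?_
  ext <;> simp [duffyDeriv]

def finThreeArrowEquiv : (Fin 3 → ℝ) ≃ₗ[ℝ] ℝ × ℝ × ℝ where
  toFun v := (v 0, v 1, v 2)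
  invFun p := ![p.1, p.2.1, p.2.2]
  map_add' v w := rfl
  map_smul' t v := rfl
  left_inv v := by ext i; fin_cases i <;> rfl
  right_inv p := rfl

theorem det_duffyDeriv (p : ℝ × ℝ × ℝ) : (duffyDeriv p).det = (1 - p.2.2) ^ 2 := by
  have hconj : (duffyDeriv p : (ℝ × ℝ × ℝ) →ₗ[ℝ] ℝ × ℝ × ℝ) =
      finThreeArrowEquiv.toLinearMap ∘ₗ
        Matrix.toLin' !![1 - p.2.2, 0, -p.1; 0, 1 - p.2.2, -p.2.1; 0, 0, 1] ∘ₗ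
        finThreeArrowEquiv.symm.toLinearMap := by
    refine LinearMap.ext fun v => ?_
    change duffyDeriv p v = finThreeArrowEquiv (Matrix.toLin' _ ![v.1, v.2.1, v.2.2])
    rw [Matrix.toLin'_apply, show ∀ w, finThreeArrowEquiv w = (w 0, w 1, w 2) from fun _ => rfl]
    ext <;> simp [duffyDeriv, Matrix.mulVec, dotProduct, Fin.sum_univ_three] <;> ring
  rw [ContinuousLinearMap.det, hconj, LinearMap.det_conj, LinearMap.det_toLin',
    Matrix.det_fin_three]
  simp
  ring

def halfOpenCube : Set (ℝ × ℝ × ℝ) := Icc 0 1 ×ˢ Icc 0 1 ×ˢ Ico 0 1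

theorem measurableSet_halfOpenCube : MeasurableSet halfOpenCube :=
  measurableSet_Icc.prod (measurableSet_Icc.prod measurableSet_Ico)

theorem injOn_duffy : InjOn duffy halfOpenCube := by
  rintro ⟨x, y, z⟩ ⟨-, -, -, hz⟩ ⟨x', y', z'⟩ - h
  simp only [duffy, Prod.mk.injEq] at h
  obtain ⟨hx, hy, rfl⟩ := h
  have hz' : 1 - z ≠ 0 := by linarith
  simp [mul_right_cancel₀ hz' hx, mul_right_cancel₀ hz' hy]

theorem insert_duffy_image_halfOpenCube : insert (0, 0, 1) (duffy '' halfOpenCube) = Khat := by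
  ext ⟨ξ, η, ζ⟩
  simp only [mem_insert_iff, Prod.mk.injEq, mem_image, Khat]
  constructor
  · rintro (⟨rfl, rfl, rfl⟩ | ⟨⟨x, y, z⟩, ⟨⟨hx₀, hx₁⟩, ⟨hy₀, hy₁⟩, ⟨hz₀, hz₁⟩⟩, h⟩)
    · norm_num
    · simp only [duffy, Prod.mk.injEq] at h
      obtain ⟨rfl, rfl, rfl⟩ := h
      refine ⟨hz₀, hz₁.le, by nlinarith, by nlinarith, by nlinarith, by nlinarith⟩
  · rintro ⟨hζ₀, hζ₁, hξ₀, hξ₁, hη₀, hη₁⟩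
    rcases hζ₁.lt_or_eq with hζ₁ | rfl
    · right
      have h : 0 < 1 - ζ := by linarith
      refine ⟨(ξ / (1 - ζ), η / (1 - ζ), ζ),
        ⟨⟨by positivity, ?_⟩, ⟨by positivity, ?_⟩, hζ₀, hζ₁⟩, ?_⟩
      · rwa [div_le_one h]
      · rwa [div_le_one h]
      · simp [duffy, h.ne']
    · left
      exact ⟨by linarith, by linarith, rfl⟩

instance : (volume : Measure (ℝ × ℝ)).IsAddHaarMeasure := by
  rw [Measure.volume_eq_prod]
  infer_instance

instance : (volume : Measure (ℝ × ℝ × ℝ)).IsAddHaarMeasure := by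
  rw [Measure.volume_eq_prod]
  infer_instance

theorem Khat_ae_eq_duffy_image : Khat =ᵐ[volume] duffy '' halfOpenCube := by
  rw [← insert_duffy_image_halfOpenCube]
  exact insert_ae_eq_self _ _

section

variable {E : Type*} [NormedAddCommGroup E] [NormedSpace ℝ E]

theorem integrableOn_Khat_iff {F : ℝ × ℝ × ℝ → E} :
    IntegrableOn F Khat ↔
      IntegrableOn (fun p => (1 - p.2.2) ^ 2 • F (duffy p)) halfOpenCube := by
  rw [IntegrableOn, Measure.restrict_congr_set Khat_ae_eq_duffy_image, ← IntegrableOn,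
    integrableOn_image_iff_integrableOn_abs_det_fderiv_smul volume measurableSet_halfOpenCube
      (fun p _ => (hasFDerivAt_duffy p).hasFDerivWithinAt) injOn_duffy]
  simp only [det_duffyDeriv, abs_pow, sq_abs]

theorem integral_Khat (F : ℝ × ℝ × ℝ → E) :
    ∫ p in Khat, F p = ∫ p in halfOpenCube, (1 - p.2.2) ^ 2 • F (duffy p) := by
  rw [setIntegral_congr_set Khat_ae_eq_duffy_image,
    integral_image_eq_integral_abs_det_fderiv_smul volume measurableSet_halfOpenCube
      (fun p _ => (hasFDerivAt_duffy p).hasFDerivWithinAt) injOn_duffy]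
  simp only [det_duffyDeriv, abs_pow, sq_abs]

end

theorem integrableOn_halfOpenCube {G : ℝ × ℝ × ℝ → ℝ} (hG : Continuous G) :
    IntegrableOn G halfOpenCube :=
  (hG.continuousOn.integrableOn_compact
    (isCompact_Icc.prod (isCompact_Icc.prod isCompact_Icc))).mono_set (prod_mono subset_rfl (prod_mono subset_rfl Ico_subset_Icc_self))

theorem TensorPoly.integrableOn_weighted {d₁ d₂ d₃ : ℕ} {G : ℝ × ℝ × ℝ → ℝ}
    (hG : G ∈ TensorPoly d₁ d₂ d₃) :
    IntegrableOn (fun p => (1 - p.2.2) ^ 2 * G p) halfOpenCube :=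
  integrableOn_halfOpenCube (by have := TensorPoly.continuous hG; fun_prop)

def cubeRule {N M : ℕ} (xi lam : Fin N → ℝ) (ze mu : Fin M → ℝ) (G : ℝ × ℝ × ℝ → ℝ) : ℝ :=
  ∑ i, ∑ j, ∑ l, lam i * lam j * mu l * G (xi i, xi j, ze l)

theorem quadS_eq_cubeRule_comp_duffy {N M : ℕ} (xi lam : Fin N → ℝ) (ze mu : Fin M → ℝ)
    (F : ℝ × ℝ × ℝ → ℝ) : quadS xi lam ze mu F = cubeRule xi lam ze mu (F ∘ duffy) :=
  rfl

theorem cubeRule_eq_integral {N M D d₁ d₂ d₃ : ℕ} {xi lam : Fin N → ℝ} {ze mu : Fin M → ℝ}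
    (hxi : ∀ g : ℝ[X], g.natDegree ≤ D → ∑ i, lam i * g.eval (xi i) = ∫ x in (0:ℝ)..1, g.eval x)
    (hmu : ∀ h : ℝ[X], h.natDegree ≤ D →
      ∑ l, mu l * h.eval (ze l) = ∫ z in (0:ℝ)..1, (1 - z) ^ 2 * h.eval z)
    (h₁ : d₁ ≤ D) (h₂ : d₂ ≤ D) (h₃ : d₃ ≤ D) {G : ℝ × ℝ × ℝ → ℝ}
    (hG : G ∈ TensorPoly d₁ d₂ d₃) :
    cubeRule xi lam ze mu G = ∫ p in halfOpenCube, (1 - p.2.2) ^ 2 * G p := by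
  induction hG using Submodule.span_induction with
  | mem G hG =>
    obtain ⟨f, g, h, hf, hg, hh, rfl⟩ := hG
    have hrule : cubeRule xi lam ze mu (fun p => f.eval p.1 * g.eval p.2.1 * h.eval p.2.2) =
        (∑ i, lam i * f.eval (xi i)) * ((∑ j, lam j * g.eval (xi j)) *
          ∑ l, mu l * h.eval (ze l)) := by
      rw [Finset.sum_mul_sum, Finset.sum_mul_sum]
      simp only [cubeRule, Finset.mul_sum]
      exact Fintype.sum_congr _ _ fun i => Fintype.sum_congr _ _ fun j =>
        Fintype.sum_congr _ _ fun l => by ring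
    have hint : ∫ p in halfOpenCube, (1 - p.2.2) ^ 2 * (f.eval p.1 * g.eval p.2.1 * h.eval p.2.2) =
        (∫ x in Icc (0:ℝ) 1, f.eval x) * ((∫ y in Icc (0:ℝ) 1, g.eval y) *
          ∫ z in Ico (0:ℝ) 1, (1 - z) ^ 2 * h.eval z) := by
      rw [← setIntegral_prod_mul, ← setIntegral_prod_mul]
      exact setIntegral_congr_fun measurableSet_halfOpenCube fun p _ => by ring
    rw [hrule, hint, hxi f (hf.trans h₁), hxi g (hg.trans h₂), hmu h (hh.trans h₃)]
    simp only [intervalIntegral.integral_of_le zero_le_one, integral_Icc_eq_integral_Ioc,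
      integral_Ico_eq_integral_Ioo, integral_Ioc_eq_integral_Ioo]
  | zero => simp [cubeRule]
  | add F G hF hG hF' hG' =>
    rw [show cubeRule xi lam ze mu (F + G) = cubeRule xi lam ze mu F + cubeRule xi lam ze mu G by
      simp [cubeRule, mul_add, Finset.sum_add_distrib], hF', hG', ← integral_add]
    · simp [mul_add]
    · exact TensorPoly.integrableOn_weighted hF
    · exact TensorPoly.integrableOn_weighted hG
  | smul c G _ hG =>
    rw [show cubeRule xi lam ze mu (c • G) = c * cubeRule xi lam ze mu G by
      simp [cubeRule, Finset.mul_sum, mul_left_comm], hG, ← integral_const_mul]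
    simp [mul_left_comm]

theorem cubeRule_congr {N M : ℕ} (xi lam : Fin N → ℝ) {ze : Fin M → ℝ} (mu : Fin M → ℝ)
    (hze : ∀ l, ze l ≠ 1) {F G : ℝ × ℝ × ℝ → ℝ} (hFG : ∀ p : ℝ × ℝ × ℝ, p.2.2 ≠ 1 → F p = G p) :
    cubeRule xi lam ze mu F = cubeRule xi lam ze mu G := by
  simp only [cubeRule, fun i j l => hFG (xi i, xi j, ze l) (hze l)]

/-- for ũ, ṽ ∈ U^{(1)}_k and a constant matrix A, the function
F = ∑_{i,j} A_{ij} ûᵢ v̂ⱼ (where û, v̂ are obtained via the covariant 1-form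
transformation through φ) is integrable on K̂ and the conical product rule of
order k ≥ 1 is exact for it. -/
theorem stmt_5 (k : ℕ) (hk : 1 ≤ k) {N M : ℕ} (xi lam : Fin N → ℝ) (ze mu : Fin M → ℝ)
    (hze : ∀ l, ze l ∈ Set.Ico (0 : ℝ) 1)
    (hxi : ∀ g : Polynomial ℝ, g.natDegree ≤ 2 * k + 1 →
      ∑ i, lam i * g.eval (xi i) = ∫ x in (0:ℝ)..1, g.eval x)
    (hmu : ∀ h : Polynomial ℝ, h.natDegree ≤ 2 * k + 1 →
      ∑ l, mu l * h.eval (ze l) = ∫ z in (0:ℝ)..1, (1 - z) ^ 2 * h.eval z)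
    (u1 u2 u3 v1 v2 v3 : (ℝ × ℝ × ℝ) → ℝ)
    (hu : U1mem k u1 u2 u3) (hv : U1mem k v1 v2 v3)
    (A : Matrix (Fin 3) (Fin 3) ℝ)
    (uh vh : Fin 3 → (ℝ × ℝ × ℝ) → ℝ)
    (huh : ∀ p : ℝ × ℝ × ℝ, p.2.2 ≠ 1 →
      uh 0 p = (1 + (phiInv p).2.2) * u1 (phiInv p) ∧
      uh 1 p = (1 + (phiInv p).2.2) * u2 (phiInv p) ∧
      uh 2 p = (1 + (phiInv p).2.2) *
        ((phiInv p).1 * u1 (phiInv p) + (phiInv p).2.1 * u2 (phiInv p) +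
          (1 + (phiInv p).2.2) * u3 (phiInv p)))
    (hvh : ∀ p : ℝ × ℝ × ℝ, p.2.2 ≠ 1 →
      vh 0 p = (1 + (phiInv p).2.2) * v1 (phiInv p) ∧
      vh 1 p = (1 + (phiInv p).2.2) * v2 (phiInv p) ∧
      vh 2 p = (1 + (phiInv p).2.2) *
        ((phiInv p).1 * v1 (phiInv p) + (phiInv p).2.1 * v2 (phiInv p) +
          (1 + (phiInv p).2.2) * v3 (phiInv p)))
    (F : (ℝ × ℝ × ℝ) → ℝ)
    (hF : F = fun p => ∑ i : Fin 3, ∑ j : Fin 3, A i j * uh i p * vh j p) :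
    IntegrableOn F Khat volume ∧ quadS xi lam ze mu F = ∫ p in Khat, F p := by
  obtain ⟨Gu, hGu, huG⟩ := hu.exists_tensorPoly_covariant_comp_duffy hk huh
  obtain ⟨Gv, hGv, hvG⟩ := hv.exists_tensorPoly_covariant_comp_duffy hk hvh
  set G := ∑ i, ∑ j, A i j • (Gu i * Gv j)
  have hG : G ∈ TensorPoly (k + k) (k + k) (k + k) :=
    Submodule.sum_mem _ fun i _ => Submodule.sum_mem _ fun j _ =>
      Submodule.smul_mem _ _ (TensorPoly.mul_mem (hGu i) (hGv j))
  have hFG : ∀ p : ℝ × ℝ × ℝ, p.2.2 ≠ 1 → (F ∘ duffy) p = G p := fun p hp => by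
    simp [hF, G, huG _ p hp, hvG _ p hp, mul_assoc]
  have hweight : EqOn (fun p => (1 - p.2.2) ^ 2 • F (duffy p)) (fun p => (1 - p.2.2) ^ 2 * G p)
      halfOpenCube := fun p hp => by
    simp only [smul_eq_mul, ← hFG p hp.2.2.2.ne, Function.comp_apply]
  refine ⟨integrableOn_Khat_iff.2 ((TensorPoly.integrableOn_weighted hG).congr_fun
    hweight.symm measurableSet_halfOpenCube), ?_⟩
  rw [quadS_eq_cubeRule_comp_duffy, cubeRule_congr xi lam mu (fun l => (hze l).2.ne) hFG,
    integral_Khat, setIntegral_congr_fun measurableSet_halfOpenCube hweight]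
  exact cubeRule_eq_integral hxi hmu (by omega) (by omega) (by omega) hG
end
end

section
/- Let k ≥ 1 be an integer and let ũ = (ũ₁,ũ₂,ũ₃) be an element of the H(curl)-underlying space U^{(1)}_k. Then each of the three functions on K∞ given by (1+z)·ũ₁, (1+z)·ũ₂, and (1+z)·(x·ũ₁ + y·ũ₂ + (1+z)·ũ₃) belongs to Q_k^{k,k,k}. -/
open MeasureTheory

noncomputable section

/-- The infinite pyramid K∞ = [0,1] × [0,1] × [0,∞). -/
def Kinf : Set (ℝ × ℝ × ℝ) :=
  {p | 0 ≤ p.1 ∧ p.1 ≤ 1 ∧ 0 ≤ p.2.1 ∧ p.2.1 ≤ 1 ∧ 0 ≤ p.2.2}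

/-- Partial derivative does not increase the degree in any variable. -/
lemma aux_degreeOf_pderiv_le (i j : Fin 2) (r : MvPolynomial (Fin 2) ℝ) :
    (MvPolynomial.pderiv j r).degreeOf i ≤ r.degreeOf i := by
  conv_lhs => rw [r.as_sum]
  rw [map_sum]
  refine (MvPolynomial.degreeOf_sum_le _ _ _).trans ?_
  rw [Finset.sup_le_iff]
  intro d hd
  rw [MvPolynomial.pderiv_monomial]
  refine le_trans ?_ (MvPolynomial.monomial_le_degreeOf i hd)
  rw [MvPolynomial.degreeOf_le_iff]
  intro m hm
  have := MvPolynomial.support_monomial_subset hm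
  simp only [Finset.mem_singleton] at this
  subst this
  simp [Finsupp.tsub_apply]

/-- Partial derivative strictly decreases the degree in its own variable. -/
lemma aux_degreeOf_pderiv_self (i : Fin 2) (r : MvPolynomial (Fin 2) ℝ) :
    (MvPolynomial.pderiv i r).degreeOf i ≤ r.degreeOf i - 1 := by
  conv_lhs => rw [r.as_sum]
  rw [map_sum]
  refine (MvPolynomial.degreeOf_sum_le _ _ _).trans ?_
  rw [Finset.sup_le_iff]
  intro d hd
  rw [MvPolynomial.pderiv_monomial]
  rw [MvPolynomial.degreeOf_le_iff]
  intro m hm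
  have hne : (MvPolynomial.coeff d r * (d i : ℝ)) ≠ 0 := by
    intro h0
    rw [MvPolynomial.mem_support_iff, MvPolynomial.coeff_monomial] at hm
    simp [h0] at hm
  have hdi : 1 ≤ d i := by
    rcases Nat.eq_zero_or_pos (d i) with h | h
    · exfalso; apply hne; simp [h]
    · exact h
  have := MvPolynomial.support_monomial_subset hm
  simp only [Finset.mem_singleton] at this
  subst this
  have hle : d i ≤ r.degreeOf i := MvPolynomial.monomial_le_degreeOf i hd
  simp only [Finsupp.tsub_apply, Finsupp.single_eq_same]
  omega

/-- Multiplying every generator by `g` sends the span into `T`. -/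
lemma aux_span_mul {g : (ℝ × ℝ × ℝ) → ℝ} {S : Set ((ℝ × ℝ × ℝ) → ℝ)}
    {T : Submodule ℝ ((ℝ × ℝ × ℝ) → ℝ)}
    (h : ∀ f ∈ S, (fun p => g p * f p) ∈ T) :
    ∀ f ∈ Submodule.span ℝ S, (fun p => g p * f p) ∈ T := by
  intro f hf
  induction hf using Submodule.span_induction with
  | mem f hf => exact h f hf
  | zero =>
      have : (fun p : ℝ × ℝ × ℝ => g p * (0 : (ℝ × ℝ × ℝ) → ℝ) p) = 0 := by
        funext p; simp
      rw [this]; exact T.zero_mem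
  | add f1 f2 _ _ h1 h2 =>
      have : (fun p : ℝ × ℝ × ℝ => g p * (f1 + f2) p)
          = (fun p => g p * f1 p) + fun p => g p * f2 p := by
        funext p; simp [mul_add]
      rw [this]; exact T.add_mem h1 h2
  | smul a f _ h1 =>
      have : (fun p : ℝ × ℝ × ℝ => g p * (a • f) p)
          = a • fun p => g p * f p := by
        funext p; simp [Pi.smul_apply, smul_eq_mul]; ring
      rw [this]; exact T.smul_mem a h1

lemma aux_Qmono {k : ℕ} {l m n l' m' n' : ℤ} (hl : l ≤ l') (hm : m ≤ m') (hn : n ≤ n') :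
    Qspace k l m n ≤ Qspace k l' m' n' := by
  apply Submodule.span_mono
  rintro f ⟨a, b, c, ha, hb, hc, rfl⟩
  exact ⟨a, b, c, ha.trans hl, hb.trans hm, hc.trans hn, rfl⟩

/-- Multiplication by (1+z) lowers the weight from k+1 to k (for k ≥ 1). -/
lemma aux_mul_oneadd {k : ℕ} (hk : k ≠ 0) {l m n : ℤ} {f : (ℝ × ℝ × ℝ) → ℝ}
    (hf : f ∈ Qspace (k + 1) l m n) :
    (fun p => (1 + p.2.2) * f p) ∈ Qspace k l m n := by
  refine aux_span_mul ?_ f hf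
  rintro f ⟨a, b, c, ha, hb, hc, rfl⟩
  have : (fun p : ℝ × ℝ × ℝ => (1 + p.2.2) * (p.1 ^ a * p.2.1 ^ b * p.2.2 ^ c / (1 + p.2.2) ^ (k + 1)))
      = fun p : ℝ × ℝ × ℝ => p.1 ^ a * p.2.1 ^ b * p.2.2 ^ c / (1 + p.2.2) ^ k := by
    funext p
    rcases eq_or_ne (1 + p.2.2) 0 with h | h
    · rw [h]; simp [zero_pow hk]
    · rw [pow_succ]; field_simp
  rw [this]
  exact Submodule.subset_span ⟨a, b, c, ha, hb, hc, rfl⟩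

/-- Multiplication by (1+z) within weight k raises the z-degree by one (for k ≥ 1). -/
lemma aux_mul_oneadd' {k : ℕ} (hk : k ≠ 0) {l m n : ℤ} {f : (ℝ × ℝ × ℝ) → ℝ}
    (hf : f ∈ Qspace k l m n) :
    (fun p => (1 + p.2.2) * f p) ∈ Qspace k l m (n + 1) := by
  refine aux_span_mul ?_ f hf
  rintro f ⟨a, b, c, ha, hb, hc, rfl⟩
  have : (fun p : ℝ × ℝ × ℝ => (1 + p.2.2) * (p.1 ^ a * p.2.1 ^ b * p.2.2 ^ c / (1 + p.2.2) ^ k))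
      = (fun p : ℝ × ℝ × ℝ => p.1 ^ a * p.2.1 ^ b * p.2.2 ^ c / (1 + p.2.2) ^ k)
        + fun p : ℝ × ℝ × ℝ => p.1 ^ a * p.2.1 ^ b * p.2.2 ^ (c + 1) / (1 + p.2.2) ^ k := by
    funext p
    simp only [Pi.add_apply]
    rcases eq_or_ne (1 + p.2.2) 0 with h | h
    · rw [h]; simp [zero_pow hk]
    · field_simp; ring
  rw [this]
  exact Submodule.add_mem _
    (Submodule.subset_span ⟨a, b, c, ha, hb, hc.trans (by omega), rfl⟩)
    (Submodule.subset_span ⟨a, b, c + 1, ha, hb, by push_cast; omega, rfl⟩)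

/-- Multiplication by x raises the x-degree by one. -/
lemma aux_mul_x {k : ℕ} {l m n : ℤ} {f : (ℝ × ℝ × ℝ) → ℝ}
    (hf : f ∈ Qspace k l m n) :
    (fun p => p.1 * f p) ∈ Qspace k (l + 1) m n := by
  refine aux_span_mul ?_ f hf
  rintro f ⟨a, b, c, ha, hb, hc, rfl⟩
  have : (fun p : ℝ × ℝ × ℝ => p.1 * (p.1 ^ a * p.2.1 ^ b * p.2.2 ^ c / (1 + p.2.2) ^ k))
      = fun p : ℝ × ℝ × ℝ => p.1 ^ (a + 1) * p.2.1 ^ b * p.2.2 ^ c / (1 + p.2.2) ^ k := by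
    funext p
    rw [← mul_div_assoc]; ring_nf
  rw [this]
  exact Submodule.subset_span ⟨a + 1, b, c, by push_cast; omega, hb, hc, rfl⟩

/-- Multiplication by y raises the y-degree by one. -/
lemma aux_mul_y {k : ℕ} {l m n : ℤ} {f : (ℝ × ℝ × ℝ) → ℝ}
    (hf : f ∈ Qspace k l m n) :
    (fun p => p.2.1 * f p) ∈ Qspace k l (m + 1) n := by
  refine aux_span_mul ?_ f hf
  rintro f ⟨a, b, c, ha, hb, hc, rfl⟩
  have : (fun p : ℝ × ℝ × ℝ => p.2.1 * (p.1 ^ a * p.2.1 ^ b * p.2.2 ^ c / (1 + p.2.2) ^ k))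
      = fun p : ℝ × ℝ × ℝ => p.1 ^ a * p.2.1 ^ (b + 1) * p.2.2 ^ c / (1 + p.2.2) ^ k := by
    funext p
    rw [← mul_div_assoc]; ring_nf
  rw [this]
  exact Submodule.subset_span ⟨a, b + 1, c, ha, by push_cast; omega, hc, rfl⟩

/-- A bivariate polynomial in (x,y) times z^c/(1+z)^k lies in the weighted space. -/
lemma aux_poly_mem (k c : ℕ) (l m : ℤ) (hc : c ≤ k) (r : MvPolynomial (Fin 2) ℝ)
    (h0 : (r.degreeOf 0 : ℤ) ≤ l) (h1 : (r.degreeOf 1 : ℤ) ≤ m) :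
    (fun p : ℝ × ℝ × ℝ =>
        MvPolynomial.eval ![p.1, p.2.1] r * (p.2.2 ^ c / (1 + p.2.2) ^ k))
      ∈ Qspace k l m k := by
  have hrw : (fun p : ℝ × ℝ × ℝ =>
        MvPolynomial.eval ![p.1, p.2.1] r * (p.2.2 ^ c / (1 + p.2.2) ^ k))
      = ∑ d ∈ r.support, r.coeff d •
          fun p : ℝ × ℝ × ℝ => p.1 ^ d 0 * p.2.1 ^ d 1 * p.2.2 ^ c / (1 + p.2.2) ^ k := by
    funext p
    rw [Finset.sum_apply, MvPolynomial.eval_eq', Finset.sum_mul]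
    refine Finset.sum_congr rfl fun d _ => ?_
    rw [Fin.prod_univ_two]
    simp only [Matrix.cons_val_zero, Matrix.cons_val_one, Matrix.head_cons,
      Pi.smul_apply, smul_eq_mul]
    ring
  rw [hrw]
  refine Submodule.sum_mem _ fun d hd => Submodule.smul_mem _ _ (Submodule.subset_span
    ⟨d 0, d 1, c, ?_, ?_, by exact_mod_cast hc, rfl⟩)
  · exact le_trans (by exact_mod_cast MvPolynomial.monomial_le_degreeOf 0 hd) h0
  · exact le_trans (by exact_mod_cast MvPolynomial.monomial_le_degreeOf 1 hd) h1

/-- for ũ ∈ U^{(1)}_k, the functions (1+z)·ũ₁, (1+z)·ũ₂ and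
(1+z)·(x·ũ₁ + y·ũ₂ + (1+z)·ũ₃) all belong to Q_k^{k,k,k}. -/
theorem stmt_7 (k : ℕ) (hk : 1 ≤ k) (u1 u2 u3 : (ℝ × ℝ × ℝ) → ℝ)
    (hu : U1mem k u1 u2 u3) :
    (fun p : ℝ × ℝ × ℝ => (1 + p.2.2) * u1 p) ∈ Qspace k k k k ∧
    (fun p : ℝ × ℝ × ℝ => (1 + p.2.2) * u2 p) ∈ Qspace k k k k ∧
    (fun p : ℝ × ℝ × ℝ =>
        (1 + p.2.2) * (p.1 * u1 p + p.2.1 * u2 p + (1 + p.2.2) * u3 p)) ∈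
      Qspace k k k k := by
  obtain ⟨j, rfl⟩ : ∃ j : ℕ, k = j + 1 := ⟨k - 1, (Nat.sub_add_cancel hk).symm⟩
  set k := j + 1 with hkdef
  have hk0 : k ≠ 0 := by omega
  obtain ⟨p1, hp1, p2, hp2, p3, hp3, r, hr0, hr1, hu1, hu2, hu3⟩ := hu
  -- degrees of partial derivatives
  have hd00 : ((MvPolynomial.pderiv 0 r).degreeOf 0 : ℤ) ≤ (k : ℤ) - 1 := by
    have h := aux_degreeOf_pderiv_self 0 r
    have : (MvPolynomial.pderiv 0 r).degreeOf 0 ≤ k - 1 := le_trans h (by omega)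
    omega
  have hd01 : ((MvPolynomial.pderiv 0 r).degreeOf 1 : ℤ) ≤ (k : ℤ) := by
    have := (aux_degreeOf_pderiv_le 1 0 r).trans hr1; omega
  have hd10 : ((MvPolynomial.pderiv 1 r).degreeOf 0 : ℤ) ≤ (k : ℤ) := by
    have := (aux_degreeOf_pderiv_le 0 1 r).trans hr0; omega
  have hd11 : ((MvPolynomial.pderiv 1 r).degreeOf 1 : ℤ) ≤ (k : ℤ) - 1 := by
    have h := aux_degreeOf_pderiv_self 1 r
    have : (MvPolynomial.pderiv 1 r).degreeOf 1 ≤ k - 1 := le_trans h (by omega)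
    omega
  -- membership of all building blocks
  have hQ1 : (fun p : ℝ × ℝ × ℝ => (1 + p.2.2) * p1 p) ∈ Qspace k k k k :=
    aux_Qmono (by omega) le_rfl (by omega) (aux_mul_oneadd hk0 hp1)
  have hQ2 : (fun p : ℝ × ℝ × ℝ => (1 + p.2.2) * p2 p) ∈ Qspace k k k k :=
    aux_Qmono le_rfl (by omega) (by omega) (aux_mul_oneadd hk0 hp2)
  have hE1 : (fun p : ℝ × ℝ × ℝ =>
      MvPolynomial.eval ![p.1, p.2.1] (MvPolynomial.pderiv 0 r) *
        (p.2.2 ^ k / (1 + p.2.2) ^ k)) ∈ Qspace k ((k : ℤ) - 1) k k :=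
    aux_poly_mem k k _ _ le_rfl _ hd00 hd01
  have hE2 : (fun p : ℝ × ℝ × ℝ =>
      MvPolynomial.eval ![p.1, p.2.1] (MvPolynomial.pderiv 1 r) *
        (p.2.2 ^ k / (1 + p.2.2) ^ k)) ∈ Qspace k k ((k : ℤ) - 1) k :=
    aux_poly_mem k k _ _ le_rfl _ hd10 hd11
  have hE3a : (fun p : ℝ × ℝ × ℝ =>
      MvPolynomial.eval ![p.1, p.2.1] r * (p.2.2 ^ j / (1 + p.2.2) ^ k))
      ∈ Qspace k k k k :=
    aux_poly_mem k j _ _ (by omega) _ (by exact_mod_cast hr0) (by exact_mod_cast hr1)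
  have hE3b : (fun p : ℝ × ℝ × ℝ =>
      MvPolynomial.eval ![p.1, p.2.1] r * (p.2.2 ^ k / (1 + p.2.2) ^ k))
      ∈ Qspace k k k k :=
    aux_poly_mem k k _ _ le_rfl _ (by exact_mod_cast hr0) (by exact_mod_cast hr1)
  refine ⟨?_, ?_, ?_⟩
  · -- first component
    have heq : (fun p : ℝ × ℝ × ℝ => (1 + p.2.2) * u1 p)
        = (fun p : ℝ × ℝ × ℝ => (1 + p.2.2) * p1 p)
          + fun p : ℝ × ℝ × ℝ =>
              MvPolynomial.eval ![p.1, p.2.1] (MvPolynomial.pderiv 0 r) *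
                (p.2.2 ^ k / (1 + p.2.2) ^ k) := by
      funext p
      rw [hu1]
      simp only [Pi.add_apply, hkdef, Nat.add_sub_cancel]
      rcases eq_or_ne (1 + p.2.2) 0 with h | h
      · rw [h]; simp
      · field_simp; ring
    rw [heq]
    exact Submodule.add_mem _ hQ1 (aux_Qmono (by omega) le_rfl le_rfl hE1)
  · -- second component
    have heq : (fun p : ℝ × ℝ × ℝ => (1 + p.2.2) * u2 p)
        = (fun p : ℝ × ℝ × ℝ => (1 + p.2.2) * p2 p)
          + fun p : ℝ × ℝ × ℝ =>
              MvPolynomial.eval ![p.1, p.2.1] (MvPolynomial.pderiv 1 r) *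
                (p.2.2 ^ k / (1 + p.2.2) ^ k) := by
      funext p
      rw [hu2]
      simp only [Pi.add_apply, hkdef, Nat.add_sub_cancel]
      rcases eq_or_ne (1 + p.2.2) 0 with h | h
      · rw [h]; simp
      · field_simp; ring
    rw [heq]
    exact Submodule.add_mem _ hQ2 (aux_Qmono le_rfl (by omega) le_rfl hE2)
  · -- third component
    have hA1 : (fun p : ℝ × ℝ × ℝ => p.1 * ((1 + p.2.2) * p1 p)) ∈ Qspace k k k k :=
      aux_Qmono (by omega) le_rfl (by omega) (aux_mul_x (aux_mul_oneadd hk0 hp1))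
    have hA2 : (fun p : ℝ × ℝ × ℝ => p.2.1 * ((1 + p.2.2) * p2 p)) ∈ Qspace k k k k :=
      aux_Qmono le_rfl (by omega) (by omega) (aux_mul_y (aux_mul_oneadd hk0 hp2))
    have hA3 : (fun p : ℝ × ℝ × ℝ => (1 + p.2.2) * ((1 + p.2.2) * p3 p)) ∈ Qspace k k k k :=
      aux_Qmono le_rfl le_rfl (by omega) (aux_mul_oneadd' hk0 (aux_mul_oneadd hk0 hp3))
    have hA4 : (fun p : ℝ × ℝ × ℝ => p.1 *
        (MvPolynomial.eval ![p.1, p.2.1] (MvPolynomial.pderiv 0 r) *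
          (p.2.2 ^ k / (1 + p.2.2) ^ k))) ∈ Qspace k k k k :=
      aux_Qmono (by omega) le_rfl le_rfl (aux_mul_x hE1)
    have hA5 : (fun p : ℝ × ℝ × ℝ => p.2.1 *
        (MvPolynomial.eval ![p.1, p.2.1] (MvPolynomial.pderiv 1 r) *
          (p.2.2 ^ k / (1 + p.2.2) ^ k))) ∈ Qspace k k k k :=
      aux_Qmono le_rfl (by omega) le_rfl (aux_mul_y hE2)
    have heq : (fun p : ℝ × ℝ × ℝ =>
          (1 + p.2.2) * (p.1 * u1 p + p.2.1 * u2 p + (1 + p.2.2) * u3 p))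
        = (fun p : ℝ × ℝ × ℝ => p.1 * ((1 + p.2.2) * p1 p))
          + (fun p : ℝ × ℝ × ℝ => p.2.1 * ((1 + p.2.2) * p2 p))
          + (fun p : ℝ × ℝ × ℝ => (1 + p.2.2) * ((1 + p.2.2) * p3 p))
          + (fun p : ℝ × ℝ × ℝ => p.1 *
              (MvPolynomial.eval ![p.1, p.2.1] (MvPolynomial.pderiv 0 r) *
                (p.2.2 ^ k / (1 + p.2.2) ^ k)))
          + (fun p : ℝ × ℝ × ℝ => p.2.1 *
              (MvPolynomial.eval ![p.1, p.2.1] (MvPolynomial.pderiv 1 r) *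
                (p.2.2 ^ k / (1 + p.2.2) ^ k)))
          - ((fun p : ℝ × ℝ × ℝ =>
                MvPolynomial.eval ![p.1, p.2.1] r * (p.2.2 ^ j / (1 + p.2.2) ^ k))
              + fun p : ℝ × ℝ × ℝ =>
                MvPolynomial.eval ![p.1, p.2.1] r * (p.2.2 ^ k / (1 + p.2.2) ^ k)) := by
      funext p
      rw [hu1, hu2, hu3]
      simp only [Pi.add_apply, Pi.sub_apply, hkdef, Nat.add_sub_cancel]
      rcases eq_or_ne (1 + p.2.2) 0 with h | h
      · rw [h]; simp
      · field_simp; ring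
    rw [heq]
    exact Submodule.sub_mem _
      (Submodule.add_mem _
        (Submodule.add_mem _
          (Submodule.add_mem _ (Submodule.add_mem _ hA1 hA2) hA3) hA4) hA5)
      (Submodule.add_mem _ hE3a hE3b)
end
end

section
/- For integers k ≥ 0 and l, m, the space Q_k^{[l,m]} decomposes as the internal direct sum Q_k^{[l,m]} = ⊕_{r=0}^{k} Q_r^{r+l−k, r+m−k, 0}: the subspaces Q_r^{r+l−k,r+m−k,0} of the real-valued functions on K∞, for r = 0,…,k, are linearly independent (their sum is direct) and their sum equals Q_k^{[l,m]}. -/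
open MeasureTheory

noncomputable section

/-- The space Q_k^{[l,m]}: the span of (x,y,z) ↦ x^a y^b/(1+z)^c for
0 ≤ c ≤ k, 0 ≤ a ≤ c+l−k, 0 ≤ b ≤ c+m−k. -/
def QB (k : ℕ) (l m : ℤ) : Submodule ℝ ((ℝ × ℝ × ℝ) → ℝ) :=
  Submodule.span ℝ {f | ∃ a b c : ℕ, c ≤ k ∧ (a : ℤ) ≤ c + l - k ∧ (b : ℤ) ≤ c + m - k ∧
    f = fun p => p.1 ^ a * p.2.1 ^ b / (1 + p.2.2) ^ c}

/-!
The functions `x^a y^b / (1+z)^c` are linearly independent: the substitution `z ↦ 1/z - 1`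
turns them into the monomials `x^a y^b z^c`. Both `Q_r^{r+l-k, r+m-k, 0}` and `Q_k^{[l,m]}` are
spanned by such functions, the former by those with `c = r`, the latter by the union of these
families over `r ≤ k`. Spans of disjoint parts of a linearly independent family are independent.
-/

open Function Submodule

theorem LinearIndependent.iSupIndep_span_image {ι κ R M : Type*} [Ring R] [AddCommGroup M]
    [Module R M] {v : ι → M} (hv : LinearIndependent R v) {s : κ → Set ι}
    (hs : Pairwise (Disjoint on s)) : iSupIndep fun j => span R (v '' s j) := by
  intro j
  rw [← span_iUnion₂, ← Set.image_iUnion₂]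
  exact hv.disjoint_span_image (Set.disjoint_iUnion₂_right.mpr fun _ hij => hs hij.symm)

open MvPolynomial in
theorem MvPolynomial.linearIndependent_prod_pow {R σ : Type*} [CommRing R] [IsDomain R]
    [Infinite R] [Fintype σ] :
    LinearIndependent R fun e : σ → ℕ => fun x : σ → R => ∏ i, x i ^ e i := by
  let evalₗ : MvPolynomial σ R →ₗ[R] (σ → R) → R := LinearMap.pi fun x => (aeval x).toLinearMap
  have h_inj : Injective evalₗ := fun p q h => funext fun x => congrFun h x
  have h_eval : evalₗ ∘ basisMonomials σ R ∘ Finsupp.equivFunOnFinite.symm =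
      fun e x => ∏ i, x i ^ e i := by
    funext e x
    simp [evalₗ, eval_monomial, Finsupp.prod_fintype]
  rw [← h_eval]
  exact ((basisMonomials σ R).linearIndependent.comp _
    Finsupp.equivFunOnFinite.symm.injective).map' evalₗ (LinearMap.ker_eq_bot.mpr h_inj)

def qbMonomial (q : ℕ × ℕ × ℕ) : ℝ × ℝ × ℝ → ℝ :=
  fun p => p.1 ^ q.1 * p.2.1 ^ q.2.1 / (1 + p.2.2) ^ q.2.2

theorem linearIndependent_qbMonomial : LinearIndependent ℝ qbMonomial := by
  let g : (Fin 3 → ℝ) → ℝ × ℝ × ℝ := fun x => (x 0, x 1, (x 2)⁻¹ - 1)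
  have h_inj : Injective fun q : ℕ × ℕ × ℕ => ![q.1, q.2.1, q.2.2] := by
    rintro ⟨a, b, c⟩ ⟨a', b', c'⟩ h
    simpa using h
  have h_subst : LinearMap.funLeft ℝ ℝ g ∘ qbMonomial =
      (fun e x => ∏ i, x i ^ e i) ∘ fun q : ℕ × ℕ × ℕ => ![q.1, q.2.1, q.2.2] := by
    funext q x
    simp [g, qbMonomial, Fin.prod_univ_three]
  refine LinearIndependent.of_comp (LinearMap.funLeft ℝ ℝ g) ?_
  rw [h_subst]
  exact MvPolynomial.linearIndependent_prod_pow.comp _ h_inj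

def layer (l m : ℤ) (r : ℕ) : Set (ℕ × ℕ × ℕ) :=
  {q | (q.1 : ℤ) ≤ l ∧ (q.2.1 : ℤ) ≤ m ∧ q.2.2 = r}

theorem disjoint_layer {l m l' m' : ℤ} {r r' : ℕ} (h : r ≠ r') :
    Disjoint (layer l m r) (layer l' m' r') :=
  Set.disjoint_left.mpr fun _ hq hq' => h (hq.2.2.symm.trans hq'.2.2)

theorem Qspace_zero_eq_span (r : ℕ) (l m : ℤ) :
    Qspace r l m 0 = span ℝ (qbMonomial '' layer l m r) := by
  unfold Qspace
  congr 1
  ext f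
  constructor
  · rintro ⟨a, b, c, ha, hb, hc, rfl⟩
    obtain rfl : c = 0 := by omega
    exact ⟨(a, b, r), ⟨ha, hb, rfl⟩, by funext p; simp [qbMonomial]⟩
  · rintro ⟨⟨a, b, c⟩, ⟨ha, hb, rfl⟩, rfl⟩
    exact ⟨a, b, 0, ha, hb, le_rfl, by funext p; simp [qbMonomial]⟩

theorem QB_eq_span (k : ℕ) (l m : ℤ) :
    QB k l m = span ℝ (qbMonomial '' ⋃ r : Fin (k + 1), layer (r + l - k) (r + m - k) r) := by
  unfold QB
  congr 1
  ext f
  simp only [Set.mem_ofPred_eq, Set.mem_image, Set.mem_iUnion, layer]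
  constructor
  · rintro ⟨a, b, c, hc, ha, hb, rfl⟩
    exact ⟨(a, b, c), ⟨⟨c, by omega⟩, ha, hb, rfl⟩, rfl⟩
  · rintro ⟨⟨a, b, c⟩, ⟨r, ha, hb, rfl⟩, rfl⟩
    exact ⟨a, b, r, by omega, ha, hb, rfl⟩

/-- Q_k^{[l,m]} = ⊕_{r=0}^{k} Q_r^{r+l−k, r+m−k, 0}: the subspaces
are independent and their supremum is Q_k^{[l,m]}. -/
theorem stmt_11 (k : ℕ) (l m : ℤ) :
    iSupIndep
      (fun r : Fin (k + 1) =>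
        Qspace (r : ℕ) (((r : ℕ) : ℤ) + l - k) (((r : ℕ) : ℤ) + m - k) 0) ∧
    (⨆ r : Fin (k + 1),
        Qspace (r : ℕ) (((r : ℕ) : ℤ) + l - k) (((r : ℕ) : ℤ) + m - k) 0) = QB k l m := by
  simp only [Qspace_zero_eq_span]
  constructor
  · exact linearIndependent_qbMonomial.iSupIndep_span_image fun i j hij =>
      disjoint_layer (Fin.val_injective.ne hij)
  · rw [QB_eq_span, Set.image_iUnion, span_iUnion]
end
end

section
/- Let k ≥ 1 be an integer and let p : ℝ³ → ℝ be a polynomial of total degree ≤ k−1. Then the function (x,y,z) ↦ p(x/(1+z), y/(1+z), z/(1+z))/(1+z)⁴ on K∞ belongs to Q_{k+3}^{[k−1,k−1]}. (Every polynomial of degree k−1, transformed as a 3-form with weight (1+z)⁻⁴, lies in the new L²-approximation space.) -/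
open MeasureTheory

noncomputable section

lemma mono_eq (α β γ : ℕ) :
    (fun q : ℝ × ℝ × ℝ => q.1 ^ α * q.2.1 ^ β * q.2.2 ^ γ / (1 + q.2.2) ^ (α + β + γ + 4))
    = ∑ j ∈ Finset.range (γ + 1),
        ((-1 : ℝ) ^ (γ - j) * (γ.choose j)) •
          (fun q : ℝ × ℝ × ℝ => q.1 ^ α * q.2.1 ^ β / (1 + q.2.2) ^ (α + β + γ + 4 - j)) := by
  funext q
  obtain ⟨x, y, z⟩ := q
  simp only [Finset.sum_apply, Pi.smul_apply, smul_eq_mul]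
  by_cases h : (1 : ℝ) + z = 0
  · rw [h]
    rw [zero_pow (by omega)]
    simp only [div_zero]
    refine (Finset.sum_eq_zero fun j hj => ?_).symm
    rw [zero_pow (by simp at hj; omega)]
    simp
  · have hz : z ^ γ = ∑ j ∈ Finset.range (γ+1), (1+z)^j * (-1:ℝ)^(γ-j) * (γ.choose j) := by
      rw [show z = (1+z) + (-1) by ring, add_pow]; simp
    calc x ^ α * y ^ β * z ^ γ / (1 + z) ^ (α + β + γ + 4)
        = ∑ j ∈ Finset.range (γ+1),
            x ^ α * y ^ β * ((1+z)^j * (-1:ℝ)^(γ-j) * (γ.choose j)) / (1 + z) ^ (α + β + γ + 4) := by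
          rw [hz, Finset.mul_sum, Finset.sum_div]
      _ = _ := by
          refine Finset.sum_congr rfl fun j hj => ?_
          simp only [Finset.mem_range] at hj
          rw [pow_sub₀ _ h (by omega)]
          field_simp

lemma mem_QB_mono (k : ℕ) (hk : 1 ≤ k) (α β γ : ℕ) (h : α + β + γ ≤ k - 1) :
    (fun q : ℝ × ℝ × ℝ => q.1 ^ α * q.2.1 ^ β * q.2.2 ^ γ / (1 + q.2.2) ^ (α + β + γ + 4))
      ∈ QB (k + 3) ((k : ℤ) - 1) ((k : ℤ) - 1) := by
  rw [mono_eq]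
  refine Submodule.sum_mem _ fun j hj => Submodule.smul_mem _ _ ?_
  simp only [Finset.mem_range] at hj
  refine Submodule.subset_span ⟨α, β, α + β + γ + 4 - j, ?_, ?_, ?_, rfl⟩
  · omega
  · push_cast; omega
  · push_cast; omega

/-- for k ≥ 1 and any polynomial p of total degree ≤ k−1, the
3-form pullback (x,y,z) ↦ p(x/(1+z), y/(1+z), z/(1+z))/(1+z)⁴ belongs to
Q_{k+3}^{[k−1,k−1]}. -/
theorem stmt_13 (k : ℕ) (hk : 1 ≤ k) (p : MvPolynomial (Fin 3) ℝ)
    (hp : p.totalDegree ≤ k - 1) :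
    (fun q : ℝ × ℝ × ℝ =>
        MvPolynomial.eval ![q.1 / (1 + q.2.2), q.2.1 / (1 + q.2.2), q.2.2 / (1 + q.2.2)] p /
          (1 + q.2.2) ^ 4)
      ∈ QB (k + 3) ((k : ℤ) - 1) ((k : ℤ) - 1) := by
  have key : (fun q : ℝ × ℝ × ℝ =>
        MvPolynomial.eval ![q.1 / (1 + q.2.2), q.2.1 / (1 + q.2.2), q.2.2 / (1 + q.2.2)] p /
          (1 + q.2.2) ^ 4)
      = ∑ d ∈ p.support, (MvPolynomial.coeff d p) •
          (fun q : ℝ × ℝ × ℝ =>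
            q.1 ^ d 0 * q.2.1 ^ d 1 * q.2.2 ^ d 2 / (1 + q.2.2) ^ (d 0 + d 1 + d 2 + 4)) := by
    funext q
    obtain ⟨x, y, z⟩ := q
    simp only [Finset.sum_apply, Pi.smul_apply, smul_eq_mul]
    rw [MvPolynomial.eval_eq', Finset.sum_div]
    refine Finset.sum_congr rfl fun d hd => ?_
    rw [Fin.prod_univ_three]
    simp only [Matrix.cons_val_zero, Matrix.cons_val_one, Matrix.head_cons,
      Matrix.cons_val_two, Matrix.tail_cons]
    rw [div_pow, div_pow, div_pow, div_mul_div_comm, div_mul_div_comm, mul_div_assoc,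
      div_div, ← pow_add, ← pow_add, ← pow_add]
  rw [key]
  refine Submodule.sum_mem _ fun d hd => Submodule.smul_mem _ _ ?_
  refine mem_QB_mono k hk _ _ _ ?_
  have := MvPolynomial.le_totalDegree hd
  have hsum : (d.sum fun _ e => e) = d 0 + d 1 + d 2 := by
    rw [Finsupp.sum_fintype _ _ (fun _ => rfl), Fin.sum_univ_three]
  omega
end
end

section
/- Let k ≥ 1 be an integer. The linear map u ↦ ∂u/∂z (partial derivative with respect to the third coordinate), acting on real-valued functions on the open infinite pyramid U∞ = (0,1) × (0,1) × (0,∞), restricts to a linear bijection from Q_{k+2}^{[k−1,k−1]} onto Q_{k+3}^{[k−1,k−1]}. (Equivalently: the divergence maps the third summand {0}×{0}×Q_{k+2}^{[k−1,k−1]} of R^{(2)}_k bijectively onto R^{(3)}_k = Q_{k+3}^{[k−1,k−1]}.) -/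
open MeasureTheory

noncomputable section

/-- The open infinite pyramid U∞ = (0,1) × (0,1) × (0,∞). -/
def Uinf : Set (ℝ × ℝ × ℝ) :=
  {p | 0 < p.1 ∧ p.1 < 1 ∧ 0 < p.2.1 ∧ p.2.1 < 1 ∧ 0 < p.2.2}

/-- Partial derivative with respect to the first coordinate x. -/
def Dx (u : (ℝ × ℝ × ℝ) → ℝ) : (ℝ × ℝ × ℝ) → ℝ :=
  fun p => deriv (fun t => u (t, p.2.1, p.2.2)) p.1

/-- Partial derivative with respect to the second coordinate y. -/
def Dy (u : (ℝ × ℝ × ℝ) → ℝ) : (ℝ × ℝ × ℝ) → ℝ :=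
  fun p => deriv (fun t => u (p.1, t, p.2.2)) p.2.1

/-- Partial derivative with respect to the third coordinate z. -/
def Dz (u : (ℝ × ℝ × ℝ) → ℝ) : (ℝ × ℝ × ℝ) → ℝ :=
  fun p => deriv (fun t => u (p.1, p.2.1, t)) p.2.2

/-!
`∂_z` sends the generator `x^a y^b (1+z)^(-c)` of `Q_k^{[l,m]}` to `-c x^a y^b (1+z)^(-c-1)`, a
multiple of a generator of `Q_{k+1}^{[l,m]}`; conversely, when `l < k` the constraint `0 ≤ a`
forces `c ≥ 2` in every generator of `Q_{k+1}^{[l,m]}`, which then has the antiderivative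
`-x^a y^b (1+z)^(-(c-1))/(c-1)` in `Q_k^{[l,m]}`. Injectivity holds because for `l < k` every
element of `Q_k^{[l,m]}` tends to `0` as `z → ∞`, so it cannot have vanishing `∂_z` without
vanishing itself.
-/

open Filter Topology

namespace Submodule

variable {R M N : Type*} [Semiring R] [AddCommMonoid M] [AddCommMonoid N] [Module R M] [Module R N]

theorem forall_mem_span_exists_snd_mem {P : Submodule R (M × N)} {s : Set M}
    {T : Submodule R N} (h : ∀ u ∈ s, ∃ w ∈ T, (u, w) ∈ P) :
    ∀ u ∈ span R s, ∃ w ∈ T, (u, w) ∈ P := by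
  have hle : span R s ≤ (P ⊓ prod ⊤ T).map (LinearMap.fst R M N) := span_le.mpr fun u hu =>
    let ⟨w, hwT, huw⟩ := h u hu
    ⟨(u, w), ⟨huw, trivial, hwT⟩, rfl⟩
  intro u hu
  obtain ⟨⟨u, w⟩, ⟨huw, -, hwT⟩, rfl⟩ := hle hu
  exact ⟨w, hwT, huw⟩

theorem forall_mem_span_exists_fst_mem {P : Submodule R (M × N)} {s : Set N}
    {S : Submodule R M} (h : ∀ w ∈ s, ∃ u ∈ S, (u, w) ∈ P) :
    ∀ w ∈ span R s, ∃ u ∈ S, (u, w) ∈ P :=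
  forall_mem_span_exists_snd_mem (P := P.comap (LinearEquiv.prodComm R N M).toLinearMap) h

end Submodule

theorem eq_zero_of_hasDerivAt_zero_of_tendsto_atTop {E : Type*} [NormedAddCommGroup E]
    [NormedSpace ℝ E] {f : ℝ → E} {z : ℝ} (hf : ∀ t, z ≤ t → HasDerivAt f 0 t)
    (hlim : Tendsto f atTop (𝓝 0)) : f z = 0 := by
  have hconst : ∀ T, z ≤ T → f T = f z := fun T hzT =>
    constant_of_has_deriv_right_zero
      (fun t ht => (hf t ht.1).continuousAt.continuousWithinAt)
      (fun t ht => (hf t ht.1).hasDerivWithinAt) T ⟨hzT, le_rfl⟩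
  refine tendsto_nhds_unique (tendsto_const_nhds.congr' ?_) hlim
  filter_upwards [eventually_ge_atTop z] with T hzT
  exact (hconst T hzT).symm

theorem hasDerivAt_div_one_add_pow (C : ℝ) (c : ℕ) {t : ℝ} (ht : 1 + t ≠ 0) :
    HasDerivAt (fun s => C / (1 + s) ^ c) (-c * (C / (1 + t) ^ (c + 1))) t := by
  have hpow := (((hasDerivAt_id' t).const_add 1).fun_pow c).fun_inv (pow_ne_zero c ht)
  have hmul := hpow.const_mul C
  simp only [← div_eq_mul_inv] at hmul
  refine hmul.congr_deriv ?_
  rcases c with _ | c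
  · simp
  · rw [Nat.add_sub_cancel]
    field_simp
    ring

theorem tendsto_div_one_add_pow_atTop (C : ℝ) {c : ℕ} (hc : c ≠ 0) :
    Tendsto (fun t : ℝ => C / (1 + t) ^ c) atTop (𝓝 0) := by
  have h := ((tendsto_pow_atTop hc).comp
    (tendsto_atTop_add_const_left _ 1 tendsto_id)).inv_tendsto_atTop.const_mul C
  simpa [div_eq_mul_inv] using h

def pyramidMonomial (a b c : ℕ) : (ℝ × ℝ × ℝ) → ℝ :=
  fun p => p.1 ^ a * p.2.1 ^ b / (1 + p.2.2) ^ c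

theorem pyramidMonomial_mem_QB {k a b c : ℕ} {l m : ℤ} (hc : c ≤ k) (ha : (a : ℤ) ≤ c + l - k)
    (hb : (b : ℤ) ≤ c + m - k) : pyramidMonomial a b c ∈ QB k l m :=
  Submodule.subset_span ⟨a, b, c, hc, ha, hb, rfl⟩

/-- Pairs `(u, w)` with `w` a true `z`-derivative of `u` (not a junk value of `deriv`) at every
point with `z > 0`. -/
def zDerivGraph : Submodule ℝ (((ℝ × ℝ × ℝ) → ℝ) × ((ℝ × ℝ × ℝ) → ℝ)) where
  carrier := {q | ∀ x y t : ℝ, 0 < t → HasDerivAt (fun s => q.1 (x, y, s)) (q.2 (x, y, t)) t}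
  zero_mem' _ _ t _ := hasDerivAt_const t (0 : ℝ)
  add_mem' hq hq' x y t ht := (hq x y t ht).add (hq' x y t ht)
  smul_mem' r _ hq x y t ht := (hq x y t ht).const_mul r

def zDecaying : Submodule ℝ ((ℝ × ℝ × ℝ) → ℝ) where
  carrier := {u | ∀ x y : ℝ, Tendsto (fun t => u (x, y, t)) atTop (𝓝 0)}
  zero_mem' _ _ := tendsto_const_nhds
  add_mem' hu hv x y := by simpa using (hu x y).add (hv x y)
  smul_mem' r _ hu x y := by simpa using (hu x y).const_mul r

theorem Dz_eq_of_mem_zDerivGraph {u w : (ℝ × ℝ × ℝ) → ℝ} (h : (u, w) ∈ zDerivGraph)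
    {p : ℝ × ℝ × ℝ} (hp : 0 < p.2.2) : Dz u p = w p :=
  (h p.1 p.2.1 p.2.2 hp).deriv

theorem pyramidMonomial_mem_zDerivGraph (a b c : ℕ) :
    (pyramidMonomial a b c, (-c : ℝ) • pyramidMonomial a b (c + 1)) ∈ zDerivGraph :=
  fun x y t ht => by
    simpa [pyramidMonomial] using hasDerivAt_div_one_add_pow (x ^ a * y ^ b) c
      (by positivity : 1 + t ≠ 0)

theorem pyramidMonomial_mem_zDecaying (a b : ℕ) {c : ℕ} (hc : c ≠ 0) :
    pyramidMonomial a b c ∈ zDecaying :=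
  fun x y => tendsto_div_one_add_pow_atTop (x ^ a * y ^ b) hc

theorem QB_le_zDecaying {k : ℕ} {l m : ℤ} (hlk : l < k) : QB k l m ≤ zDecaying := by
  refine Submodule.span_le.mpr ?_
  rintro _ ⟨a, b, c, -, ha, -, rfl⟩
  exact pyramidMonomial_mem_zDecaying a b (c := c) (by omega)

theorem exists_mem_QB_succ_zDeriv (k : ℕ) (l m : ℤ) :
    ∀ u ∈ QB k l m, ∃ w ∈ QB (k + 1) l m, (u, w) ∈ zDerivGraph := by
  refine Submodule.forall_mem_span_exists_snd_mem ?_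
  rintro _ ⟨a, b, c, hc, ha, hb, rfl⟩
  exact ⟨_, Submodule.smul_mem _ _ (pyramidMonomial_mem_QB (c := c + 1) (by omega)
    (by push_cast; omega) (by push_cast; omega)), pyramidMonomial_mem_zDerivGraph a b c⟩

theorem exists_mem_QB_zAntideriv {k : ℕ} {l : ℤ} (hlk : l < k) (m : ℤ) :
    ∀ w ∈ QB (k + 1) l m, ∃ u ∈ QB k l m, (u, w) ∈ zDerivGraph := by
  refine Submodule.forall_mem_span_exists_fst_mem ?_
  rintro _ ⟨a, b, c, hc, ha, hb, rfl⟩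
  obtain ⟨d, rfl⟩ : ∃ d, c = d + 1 := ⟨c - 1, by omega⟩
  have hd : (d : ℝ) ≠ 0 := by
    have : d ≠ 0 := by omega
    exact_mod_cast this
  refine ⟨(-(d : ℝ)⁻¹) • pyramidMonomial a b d, Submodule.smul_mem _ _
    (pyramidMonomial_mem_QB (by omega) (by push_cast at ha ⊢; omega)
      (by push_cast at hb ⊢; omega)), ?_⟩
  have h := zDerivGraph.smul_mem (-(d : ℝ)⁻¹) (pyramidMonomial_mem_zDerivGraph a b d)
  rwa [Prod.smul_mk, smul_smul, neg_mul_neg, inv_mul_cancel₀ hd, one_smul] at h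

theorem QB_eqOn_of_eqOn_Dz {k : ℕ} {l m : ℤ} (hlk : l < k) {u v : (ℝ × ℝ × ℝ) → ℝ}
    (hu : u ∈ QB k l m) (hv : v ∈ QB k l m) (h : Set.EqOn (Dz u) (Dz v) Uinf) :
    Set.EqOn u v Uinf := by
  obtain ⟨wu, -, hwu⟩ := exists_mem_QB_succ_zDeriv k l m u hu
  obtain ⟨wv, -, hwv⟩ := exists_mem_QB_succ_zDeriv k l m v hv
  rintro p ⟨hx₀, hx₁, hy₀, hy₁, hz⟩
  have hsub : (u - v, wu - wv) ∈ zDerivGraph := zDerivGraph.sub_mem hwu hwv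
  have hderiv : ∀ t, p.2.2 ≤ t → HasDerivAt (fun s => (u - v) (p.1, p.2.1, s)) 0 t := by
    intro t ht
    have ht₀ : 0 < t := hz.trans_le ht
    have hw : wu (p.1, p.2.1, t) - wv (p.1, p.2.1, t) = 0 := by
      rw [← Dz_eq_of_mem_zDerivGraph hwu (p := (p.1, p.2.1, t)) ht₀,
        ← Dz_eq_of_mem_zDerivGraph hwv (p := (p.1, p.2.1, t)) ht₀,
        h (show (p.1, p.2.1, t) ∈ Uinf from ⟨hx₀, hx₁, hy₀, hy₁, ht₀⟩), sub_self]
    convert hsub p.1 p.2.1 t ht₀ using 1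
    exact hw.symm
  have hzero : (u - v) p = 0 :=
    eq_zero_of_hasDerivAt_zero_of_tendsto_atTop (f := fun s => (u - v) (p.1, p.2.1, s)) hderiv
      (QB_le_zDecaying hlk (sub_mem hu hv) p.1 p.2.1)
  exact sub_eq_zero.mp hzero

theorem stmt_14_general (k : ℕ) :
    (∀ u ∈ QB (k + 2) ((k : ℤ) - 1) ((k : ℤ) - 1),
      ∃ w ∈ QB (k + 3) ((k : ℤ) - 1) ((k : ℤ) - 1), Set.EqOn (Dz u) w Uinf) ∧
    (∀ u ∈ QB (k + 2) ((k : ℤ) - 1) ((k : ℤ) - 1),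
      ∀ v ∈ QB (k + 2) ((k : ℤ) - 1) ((k : ℤ) - 1),
        Set.EqOn (Dz u) (Dz v) Uinf → Set.EqOn u v Uinf) ∧
    (∀ w ∈ QB (k + 3) ((k : ℤ) - 1) ((k : ℤ) - 1),
      ∃ u ∈ QB (k + 2) ((k : ℤ) - 1) ((k : ℤ) - 1), Set.EqOn (Dz u) w Uinf) := by
  have hlk : (k : ℤ) - 1 < ((k + 2 : ℕ) : ℤ) := by push_cast; omega
  refine ⟨fun u hu => ?_, fun u hu v hv => QB_eqOn_of_eqOn_Dz hlk hu hv, fun w hw => ?_⟩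
  · obtain ⟨w, hw, huw⟩ := exists_mem_QB_succ_zDeriv _ _ _ u hu
    exact ⟨w, hw, fun p hp => Dz_eq_of_mem_zDerivGraph huw hp.2.2.2.2⟩
  · obtain ⟨u, hu, huw⟩ := exists_mem_QB_zAntideriv hlk _ w hw
    exact ⟨u, hu, fun p hp => Dz_eq_of_mem_zDerivGraph huw hp.2.2.2.2⟩

/-- for k ≥ 1, the map u ↦ ∂u/∂z restricts to a (linear) bijection
from Q_{k+2}^{[k−1,k−1]} onto Q_{k+3}^{[k−1,k−1]}, as functions on the open
infinite pyramid U∞: it maps into the target space, is injective, and is surjective. -/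
theorem stmt_14 (k : ℕ) (hk : 1 ≤ k) :
    (∀ u ∈ QB (k + 2) ((k : ℤ) - 1) ((k : ℤ) - 1),
      ∃ w ∈ QB (k + 3) ((k : ℤ) - 1) ((k : ℤ) - 1), Set.EqOn (Dz u) w Uinf) ∧
    (∀ u ∈ QB (k + 2) ((k : ℤ) - 1) ((k : ℤ) - 1),
      ∀ v ∈ QB (k + 2) ((k : ℤ) - 1) ((k : ℤ) - 1),
        Set.EqOn (Dz u) (Dz v) Uinf → Set.EqOn u v Uinf) ∧
    (∀ w ∈ QB (k + 3) ((k : ℤ) - 1) ((k : ℤ) - 1),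
      ∃ u ∈ QB (k + 2) ((k : ℤ) - 1) ((k : ℤ) - 1), Set.EqOn (Dz u) w Uinf) :=
  stmt_14_general k
end
end

section
/- Let k ≥ 1 be an integer and let v = (v₁,v₂,v₃) be a vector field on the open infinite pyramid U∞ belonging to R^{(1)}_k, i.e. v = (w₁, w₂, 0) + ∇q with w₁ ∈ Q_{k+1}^{[k−1,k]}, w₂ ∈ Q_{k+1}^{[k,k−1]}, and q ∈ Q_k^{[k,k]}. If the curl of v vanishes identically on U∞, then there exists u ∈ Q_k^{[k,k]} such that v = ∇u on U∞. (Exactness of the sequence R^{(0)}_k → R^{(1)}_k → R^{(2)}_k at R^{(1)}_k.) -/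
open MeasureTheory

noncomputable section

/-! Take `u = q`. The field `v - ∇q = (w₁, w₂, 0)` is curl-free because second derivatives
of `q` commute, and its curl is `(-∂_z w₂, ∂_z w₁, ∂_x w₂ - ∂_y w₁)`, so `w₁` and `w₂` do not depend
on `z`. But the constraint `0 ≤ a ≤ c - 2` on the generators of `Q_{k+1}^{[k-1,k]}` forces
`c ≥ 2`, so `w₁` (and likewise `w₂`) tends to `0` as `z → ∞`; hence `w₁ = w₂ = 0` on `U∞`. -/

open Filter Topology

section LineDeriv

variable {E F : Type*} [NormedAddCommGroup E] [NormedSpace ℝ E]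
  [NormedAddCommGroup F] [NormedSpace ℝ F]

theorem ContDiffAt.hasLineDerivAt_lineDeriv {f : E → F} {p : E} (hf : ContDiffAt ℝ 2 f p)
    (v w : E) :
    HasLineDerivAt ℝ (fun x => lineDeriv ℝ f x v) (fderiv ℝ (fderiv ℝ f) p w v) p w := by
  have hev : (fun x => lineDeriv ℝ f x v) =ᶠ[𝓝 p] fun x => fderiv ℝ f x v := by
    filter_upwards [hf.eventually (by simp)] with x hx
    exact (hx.differentiableAt (by simp)).lineDeriv_eq_fderiv
  have hd : DifferentiableAt ℝ (fderiv ℝ f) p :=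
    (hf.fderiv_right (m := 1) (by norm_num)).differentiableAt (by simp)
  refine HasLineDerivAt.congr_of_eventuallyEq ?_ hev
  simpa using (hd.hasFDerivAt.clm_apply (hasFDerivAt_const v p)).hasLineDerivAt w

theorem lineDeriv_eq_zero_of_curl_eq_zero {w q v₁ v₂ : E → ℝ} {p d e : E}
    (hw : DifferentiableAt ℝ w p) (hq : ContDiffAt ℝ 2 q p)
    (hv₁ : v₁ =ᶠ[𝓝 p] fun x => w x + lineDeriv ℝ q x e)
    (hv₂ : v₂ =ᶠ[𝓝 p] fun x => lineDeriv ℝ q x d)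
    (hcurl : lineDeriv ℝ v₁ p d = lineDeriv ℝ v₂ p e) :
    lineDeriv ℝ w p d = 0 := by
  have hsum : HasLineDerivAt ℝ (fun x => w x + lineDeriv ℝ q x e)
      (lineDeriv ℝ w p d + fderiv ℝ (fderiv ℝ q) p d e) p d :=
    hw.lineDifferentiableAt.hasLineDerivAt.add (hq.hasLineDerivAt_lineDeriv e d)
  have h₁ := hsum.congr_of_eventuallyEq hv₁
  have h₂ : HasLineDerivAt ℝ v₂ (fderiv ℝ (fderiv ℝ q) p e d) p e :=
    (hq.hasLineDerivAt_lineDeriv d e).congr_of_eventuallyEq hv₂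
  rw [h₁.lineDeriv, h₂.lineDeriv, (hq.isSymmSndFDerivAt (by simp)).eq] at hcurl
  linarith

end LineDeriv

theorem eqOn_zero_of_deriv_eq_zero_of_tendsto_atTop {g : ℝ → ℝ}
    (hg : DifferentiableOn ℝ g (Set.Ioi 0)) (hd : Set.EqOn (deriv g) 0 (Set.Ioi 0))
    (hlim : Tendsto g atTop (𝓝 0)) : Set.EqOn g 0 (Set.Ioi 0) := by
  intro z hz
  have hconst : g =ᶠ[atTop] fun _ => g z := by
    filter_upwards [eventually_gt_atTop 0] with t ht
    exact isOpen_Ioi.is_const_of_deriv_eq_zero isPreconnected_Ioi hg hd ht hz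
  exact tendsto_nhds_unique (tendsto_const_nhds.congr' hconst.symm) hlim

theorem Dx_eq_lineDeriv (u : ℝ × ℝ × ℝ → ℝ) (p : ℝ × ℝ × ℝ) :
    Dx u p = lineDeriv ℝ u p (1, 0, 0) := by
  obtain ⟨x, y, z⟩ := p
  simpa [lineDeriv, Dx, add_comm] using
    (deriv_comp_add_const (fun t => u (t, y, z)) x 0).symm

theorem Dy_eq_lineDeriv (u : ℝ × ℝ × ℝ → ℝ) (p : ℝ × ℝ × ℝ) :
    Dy u p = lineDeriv ℝ u p (0, 1, 0) := by
  obtain ⟨x, y, z⟩ := p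
  simpa [lineDeriv, Dy, add_comm] using
    (deriv_comp_add_const (fun t => u (x, t, z)) y 0).symm

theorem Dz_eq_lineDeriv (u : ℝ × ℝ × ℝ → ℝ) (p : ℝ × ℝ × ℝ) :
    Dz u p = lineDeriv ℝ u p (0, 0, 1) := by
  obtain ⟨x, y, z⟩ := p
  simpa [lineDeriv, Dz, add_comm] using
    (deriv_comp_add_const (fun t => u (x, y, t)) z 0).symm

theorem isOpen_Uinf : IsOpen Uinf := by
  have h : Uinf = Set.Ioo 0 1 ×ˢ Set.Ioo 0 1 ×ˢ Set.Ioi 0 := by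
    ext p
    simp [Uinf, and_assoc]
  rw [h]
  exact isOpen_Ioo.prod (isOpen_Ioo.prod isOpen_Ioi)

theorem one_add_ne_zero_of_mem_Uinf {p : ℝ × ℝ × ℝ} (hp : p ∈ Uinf) : 1 + p.2.2 ≠ 0 := by
  linarith [hp.2.2.2.2]

theorem contDiffAt_of_mem_QB {k : ℕ} {l m : ℤ} {f : ℝ × ℝ × ℝ → ℝ} (hf : f ∈ QB k l m)
    {p : ℝ × ℝ × ℝ} (hp : 1 + p.2.2 ≠ 0) {n : WithTop ℕ∞} : ContDiffAt ℝ n f p := by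
  induction hf using Submodule.span_induction with
  | mem f hf =>
    obtain ⟨a, b, c, -, -, -, rfl⟩ := hf
    exact ((contDiffAt_fst.pow a).mul (contDiffAt_snd.fst.pow b)).div
      ((contDiffAt_const.add contDiffAt_snd.snd).pow c) (pow_ne_zero c hp)
  | zero => exact contDiffAt_const
  | add f g _ _ hf hg => exact hf.add hg
  | smul r f _ hf => exact hf.const_smul r

theorem tendsto_atTop_zero_of_mem_QB {k : ℕ} {l m : ℤ} (hlm : l < k ∨ m < k)
    {f : ℝ × ℝ × ℝ → ℝ} (hf : f ∈ QB k l m) (x y : ℝ) :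
    Tendsto (fun z => f (x, y, z)) atTop (𝓝 0) := by
  induction hf using Submodule.span_induction with
  | mem f hf =>
    obtain ⟨a, b, c, -, ha, hb, rfl⟩ := hf
    have hc : c ≠ 0 := by omega
    show Tendsto (fun z : ℝ => x ^ a * y ^ b / (1 + z) ^ c) atTop (𝓝 0)
    exact tendsto_const_nhds.div_atTop
      ((tendsto_pow_atTop hc).comp (tendsto_atTop_add_const_left _ _ tendsto_id))
  | zero => exact tendsto_const_nhds
  | add f g _ _ hf hg => simpa using hf.add hg
  | smul r f _ hf => simpa using hf.const_smul r

theorem eqOn_zero_of_mem_QB_of_Dz_eq_zero {k : ℕ} {l m : ℤ} (hlm : l < k ∨ m < k)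
    {f : ℝ × ℝ × ℝ → ℝ} (hf : f ∈ QB k l m) (hDz : ∀ p ∈ Uinf, Dz f p = 0) :
    Set.EqOn f 0 Uinf := by
  rintro ⟨x, y, z⟩ ⟨hx₀, hx₁, hy₀, hy₁, hz⟩
  have hslice : DifferentiableOn ℝ (fun t => f (x, y, t)) (Set.Ioi 0) := fun t ht =>
    (((contDiffAt_of_mem_QB hf (n := 1)
      (one_add_ne_zero_of_mem_Uinf (p := (x, y, t)) ⟨hx₀, hx₁, hy₀, hy₁, ht⟩)).differentiableAt
      one_ne_zero).comp t (by fun_prop)).differentiableWithinAt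
  exact eqOn_zero_of_deriv_eq_zero_of_tendsto_atTop hslice
    (fun t ht => hDz (x, y, t) ⟨hx₀, hx₁, hy₀, hy₁, ht⟩)
    (tendsto_atTop_zero_of_mem_QB hlm hf x y) hz

theorem eqOn_zero_of_mem_QB_of_curl_eq_zero {k k' : ℕ} {l m l' m' : ℤ} (hlm : l < k ∨ m < k)
    {w q v v₃ : ℝ × ℝ × ℝ → ℝ} {e : ℝ × ℝ × ℝ} (hw : w ∈ QB k l m) (hq : q ∈ QB k' l' m')
    (hv : ∀ p ∈ Uinf, v p = w p + lineDeriv ℝ q p e)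
    (hv₃ : ∀ p ∈ Uinf, v₃ p = lineDeriv ℝ q p (0, 0, 1))
    (hcurl : ∀ p ∈ Uinf, lineDeriv ℝ v p (0, 0, 1) = lineDeriv ℝ v₃ p e) :
    Set.EqOn w 0 Uinf := by
  refine eqOn_zero_of_mem_QB_of_Dz_eq_zero hlm hw fun p hp => ?_
  have hp' := one_add_ne_zero_of_mem_Uinf hp
  rw [Dz_eq_lineDeriv]
  exact lineDeriv_eq_zero_of_curl_eq_zero
    ((contDiffAt_of_mem_QB hw hp' (n := 1)).differentiableAt one_ne_zero)
    (contDiffAt_of_mem_QB hq hp')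
    (eventually_of_mem (isOpen_Uinf.mem_nhds hp) hv)
    (eventually_of_mem (isOpen_Uinf.mem_nhds hp) hv₃) (hcurl p hp)

theorem stmt_16_general (k : ℕ) (v1 v2 v3 : (ℝ × ℝ × ℝ) → ℝ)
    (hv : ∃ w1 ∈ QB (k + 1) ((k : ℤ) - 1) k, ∃ w2 ∈ QB (k + 1) k ((k : ℤ) - 1),
      ∃ q ∈ QB k k k,
        (∀ p ∈ Uinf, v1 p = w1 p + Dx q p) ∧
        (∀ p ∈ Uinf, v2 p = w2 p + Dy q p) ∧
        (∀ p ∈ Uinf, v3 p = Dz q p))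
    (hcurl : ∀ p ∈ Uinf,
      Dy v3 p - Dz v2 p = 0 ∧ Dz v1 p - Dx v3 p = 0 ∧ Dx v2 p - Dy v1 p = 0) :
    ∃ u ∈ QB k k k, ∀ p ∈ Uinf,
      v1 p = Dx u p ∧ v2 p = Dy u p ∧ v3 p = Dz u p := by
  obtain ⟨w1, hw1, w2, hw2, q, hq, hv1, hv2, hv3⟩ := hv
  simp only [Dx_eq_lineDeriv, Dy_eq_lineDeriv, Dz_eq_lineDeriv] at hv1 hv2 hv3 hcurl ⊢
  have hw1_zero : Set.EqOn w1 0 Uinf := eqOn_zero_of_mem_QB_of_curl_eq_zero (by omega) hw1 hq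
    hv1 hv3 fun p hp => sub_eq_zero.mp (hcurl p hp).2.1
  have hw2_zero : Set.EqOn w2 0 Uinf := eqOn_zero_of_mem_QB_of_curl_eq_zero (by omega) hw2 hq
    hv2 hv3 fun p hp => (sub_eq_zero.mp (hcurl p hp).1).symm
  refine ⟨q, hq, fun p hp => ⟨?_, ?_, hv3 p hp⟩⟩
  · rw [hv1 p hp, hw1_zero hp, Pi.zero_apply, zero_add]
  · rw [hv2 p hp, hw2_zero hp, Pi.zero_apply, zero_add]

/-- exactness at R^{(1)}_k: if v = (w₁, w₂, 0) + ∇q ∈ R^{(1)}_k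
(with w₁ ∈ Q_{k+1}^{[k−1,k]}, w₂ ∈ Q_{k+1}^{[k,k−1]}, q ∈ Q_k^{[k,k]}) has
vanishing curl on U∞, then v = ∇u on U∞ for some u ∈ Q_k^{[k,k]}. -/
theorem stmt_16 (k : ℕ) (hk : 1 ≤ k) (v1 v2 v3 : (ℝ × ℝ × ℝ) → ℝ)
    (hv : ∃ w1 ∈ QB (k + 1) ((k : ℤ) - 1) k, ∃ w2 ∈ QB (k + 1) k ((k : ℤ) - 1),
      ∃ q ∈ QB k k k,
        (∀ p ∈ Uinf, v1 p = w1 p + Dx q p) ∧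
        (∀ p ∈ Uinf, v2 p = w2 p + Dy q p) ∧
        (∀ p ∈ Uinf, v3 p = Dz q p))
    (hcurl : ∀ p ∈ Uinf,
      Dy v3 p - Dz v2 p = 0 ∧ Dz v1 p - Dx v3 p = 0 ∧ Dx v2 p - Dy v1 p = 0) :
    ∃ u ∈ QB k k k, ∀ p ∈ Uinf,
      v1 p = Dx u p ∧ v2 p = Dy u p ∧ v3 p = Dz u p :=
  stmt_16_general k v1 v2 v3 hv hcurl
end
end

section
/- For all natural numbers a, b and every integer d, the function f(ξ,η,ζ) = ξ^a η^b (1−ζ)^d (integer power, defined for ζ < 1) is square-integrable on K̂ with respect to Lebesgue measure if and only if a + b + d ≥ −1. -/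
/-!
Slicing K̂ at height ζ gives the square [0, 1 - ζ]², on which ξ^{2a} η^{2b} integrates to
(1 - ζ)^{2a+2b+2} / ((2a+1)(2b+1)). By Tonelli, ∫_K̂ f² is therefore a positive multiple of
∫₀¹ (1 - ζ)^{2(a+b+d+1)} dζ, which is finite exactly when 2(a + b + d + 1) > -1.
-/

open MeasureTheory

noncomputable section

open Set
open scoped ENNReal

section Fiber

variable {α β : Type*} [MeasurableSpace α] [MeasurableSpace β] {μ : Measure α} {ν : Measure β}
  [SFinite μ] [SFinite ν]

theorem setLIntegral_prod_fiber {s : Set β} (hs : MeasurableSet s) {I : β → Set α}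
    (hI : ∀ b, MeasurableSet (I b)) (hm : MeasurableSet {p : α × β | p.2 ∈ s ∧ p.1 ∈ I p.2})
    {F : α × β → ℝ≥0∞} (hF : Measurable F) :
    ∫⁻ p in {p : α × β | p.2 ∈ s ∧ p.1 ∈ I p.2}, F p ∂μ.prod ν =
      ∫⁻ b in s, ∫⁻ a in I b, F (a, b) ∂μ ∂ν := by
  rw [← lintegral_indicator hm, lintegral_prod_symm' _ (hF.indicator hm),
    ← lintegral_indicator hs]
  congr 1 with b
  by_cases hb : b ∈ s
  · rw [indicator_of_mem hb, ← lintegral_indicator (hI b)]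
    congr 1 with a
    by_cases ha : a ∈ I b <;> simp [ha, hb]
  · simp [hb]

end Fiber

theorem setLIntegral_Icc_zero_pow (n : ℕ) {c : ℝ} (hc : 0 ≤ c) :
    ∫⁻ x in Icc 0 c, ENNReal.ofReal (x ^ n) = ENNReal.ofReal (c ^ (n + 1) / (n + 1)) := by
  rw [← ofReal_integral_eq_lintegral_ofReal (continuous_pow n).integrableOn_Icc
      ((ae_restrict_mem measurableSet_Icc).mono fun x hx => pow_nonneg hx.1 n),
    integral_Icc_eq_integral_Ioc, ← intervalIntegral.integral_of_le hc, integral_pow]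
  norm_num

theorem measurable_setLIntegral_Icc_one_sub {g : ℝ → ℝ≥0∞} :
    Measurable fun z : ℝ => ∫⁻ x in Icc 0 (1 - z), g x :=
  Antitone.measurable fun _ _ hzz' => lintegral_mono_set (Icc_subset_Icc_right (by linarith))

theorem setLIntegral_Ioo_one_sub_zpow_ne_top_iff (k : ℤ) :
    ∫⁻ z in Ioo (0 : ℝ) 1, ENNReal.ofReal ((1 - z) ^ k) ≠ ∞ ↔ -1 < k := by
  rw [lintegral_ofReal_ne_top_iff_integrable
      (by fun_prop : Measurable fun z : ℝ => (1 - z) ^ k).aestronglyMeasurable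
      ((ae_restrict_mem measurableSet_Ioo).mono fun z hz => zpow_nonneg (by linarith [hz.2]) k),
    ← IntegrableOn, ← intervalIntegrable_iff_integrableOn_Ioo_of_le zero_le_one]
  have hreflect :=
    IntervalIntegrable.comp_sub_left_iff (f := fun u : ℝ => u ^ k) (a := 1) (b := 0) 1
  simp only [sub_zero, sub_self] at hreflect
  have hrpow : (fun u : ℝ => u ^ k) = fun u => u ^ (k : ℝ) :=
    funext fun u => (Real.rpow_intCast u k).symm
  rw [hreflect, IntervalIntegrable.symm_iff,
    intervalIntegrable_iff_integrableOn_Ioo_of_le zero_le_one, hrpow,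
    intervalIntegral.integrableOn_Ioo_rpow_iff zero_lt_one]
  exact_mod_cast Iff.rfl

theorem Khat_eq_fiber : Khat = {p : ℝ × ℝ × ℝ |
    p.2 ∈ {q : ℝ × ℝ | q.2 ∈ Icc 0 1 ∧ q.1 ∈ Icc 0 (1 - q.2)} ∧ p.1 ∈ Icc 0 (1 - p.2.2)} := by
  ext p
  simp only [Khat, mem_ofPred_eq, mem_Icc]
  tauto

theorem setLIntegral_Khat_mul {g h w : ℝ → ℝ≥0∞} (hg : Measurable g) (hh : Measurable h)
    (hw : Measurable w) :
    ∫⁻ p in Khat, g p.1 * h p.2.1 * w p.2.2 =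
      ∫⁻ z in Icc 0 1, (∫⁻ x in Icc 0 (1 - z), g x) * (∫⁻ y in Icc 0 (1 - z), h y) * w z := by
  have hT : MeasurableSet {q : ℝ × ℝ | q.2 ∈ Icc 0 1 ∧ q.1 ∈ Icc 0 (1 - q.2)} := by
    measurability
  rw [Khat_eq_fiber, Measure.volume_eq_prod,
    setLIntegral_prod_fiber hT (I := fun q => Icc 0 (1 - q.2)) (fun _ => measurableSet_Icc)
      (by measurability) (by fun_prop), Measure.volume_eq_prod]
  simp only [mul_assoc, lintegral_mul_const _ hg]
  rw [setLIntegral_prod_fiber measurableSet_Icc (I := fun z => Icc 0 (1 - z))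
      (fun _ => measurableSet_Icc) hT
      (by exact (measurable_setLIntegral_Icc_one_sub.comp measurable_snd).mul (by fun_prop))]
  refine setLIntegral_congr_fun measurableSet_Icc fun z _ => ?_
  dsimp only
  rw [lintegral_const_mul _ (hh.mul_const _), lintegral_mul_const _ hh]

theorem setLIntegral_Khat_monomial_sq (a b : ℕ) (d : ℤ) :
    ∫⁻ p in Khat, ENNReal.ofReal ((p.1 ^ a * p.2.1 ^ b * (1 - p.2.2) ^ d) ^ 2) =
      ENNReal.ofReal ((2 * a + 1) * (2 * b + 1) : ℝ)⁻¹ *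
        ∫⁻ z in Ioo (0 : ℝ) 1, ENNReal.ofReal ((1 - z) ^ (2 * ((a : ℤ) + b + d + 1))) := by
  calc ∫⁻ p in Khat, ENNReal.ofReal ((p.1 ^ a * p.2.1 ^ b * (1 - p.2.2) ^ d) ^ 2)
      = ∫⁻ p in Khat, ENNReal.ofReal (p.1 ^ (2 * a)) * ENNReal.ofReal (p.2.1 ^ (2 * b)) *
          ENNReal.ofReal (((1 - p.2.2) ^ d) ^ 2) := by
        congr 1 with p
        rw [mul_pow, mul_pow, ENNReal.ofReal_mul (by positivity),
          ENNReal.ofReal_mul (by positivity), ← pow_mul', ← pow_mul']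
    _ = ∫⁻ z in Icc (0 : ℝ) 1, ENNReal.ofReal ((1 - z) ^ (2 * a + 1) / (2 * a + 1 : ℕ)) *
          ENNReal.ofReal ((1 - z) ^ (2 * b + 1) / (2 * b + 1 : ℕ)) *
          ENNReal.ofReal (((1 - z) ^ d) ^ 2) := by
        refine (setLIntegral_Khat_mul (g := fun x => ENNReal.ofReal (x ^ (2 * a)))
          (h := fun y => ENNReal.ofReal (y ^ (2 * b)))
          (w := fun z => ENNReal.ofReal (((1 - z) ^ d) ^ 2))
          (by fun_prop) (by fun_prop) (by fun_prop)).trans ?_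
        refine setLIntegral_congr_fun measurableSet_Icc fun z hz => ?_
        rw [setLIntegral_Icc_zero_pow _ (sub_nonneg.2 hz.2),
          setLIntegral_Icc_zero_pow _ (sub_nonneg.2 hz.2)]
        norm_cast
    -- at ζ = 1 the zpow identity below fails (0 ^ 0 = 1), so drop the endpoints
    _ = ∫⁻ z in Ioo (0 : ℝ) 1, ENNReal.ofReal ((1 - z) ^ (2 * a + 1) / (2 * a + 1 : ℕ)) *
          ENNReal.ofReal ((1 - z) ^ (2 * b + 1) / (2 * b + 1 : ℕ)) *
          ENNReal.ofReal (((1 - z) ^ d) ^ 2) := (setLIntegral_congr Ioo_ae_eq_Icc).symm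
    _ = ∫⁻ z in Ioo (0 : ℝ) 1, ENNReal.ofReal ((2 * a + 1) * (2 * b + 1) : ℝ)⁻¹ *
          ENNReal.ofReal ((1 - z) ^ (2 * ((a : ℤ) + b + d + 1))) := by
        refine setLIntegral_congr_fun measurableSet_Ioo fun z hz => ?_
        have hu : 0 < 1 - z := sub_pos.2 hz.2
        rw [← ENNReal.ofReal_mul (by positivity), ← ENNReal.ofReal_mul (by positivity),
          ← ENNReal.ofReal_mul (by positivity),
          show 2 * ((a : ℤ) + b + d + 1) = ((2 * a + 1 : ℕ) : ℤ) + ((2 * b + 1 : ℕ) : ℤ) + d * 2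
            by push_cast; ring,
          zpow_add₀ hu.ne', zpow_add₀ hu.ne', zpow_mul, zpow_natCast, zpow_natCast]
        push_cast
        field_simp
    _ = _ := lintegral_const_mul _ (by fun_prop)

/-- the function ξ^a η^b (1−ζ)^d (d ∈ ℤ) is square-integrable on K̂
if and only if a + b + d ≥ −1. -/
theorem stmt_17 (a b : ℕ) (d : ℤ) :
    IntegrableOn
        (fun p : ℝ × ℝ × ℝ => (p.1 ^ a * p.2.1 ^ b * (1 - p.2.2) ^ d) ^ 2) Khat volume ↔
      -1 ≤ (a : ℤ) + b + d := by
  have hconst : ENNReal.ofReal ((2 * a + 1) * (2 * b + 1) : ℝ)⁻¹ ≠ 0 := by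
    rw [ne_eq, ENNReal.ofReal_eq_zero, not_le]
    positivity
  rw [IntegrableOn, ← lintegral_ofReal_ne_top_iff_integrable
      (by fun_prop : Measurable _).aestronglyMeasurable (ae_of_all _ fun _ => sq_nonneg _),
    setLIntegral_Khat_monomial_sq, Ne, ENNReal.mul_eq_top]
  simp only [hconst, ENNReal.ofReal_ne_top, ne_eq, not_false_eq_true, true_and, false_and,
    or_false]
  rw [← Ne, setLIntegral_Ioo_one_sub_zpow_ne_top_iff]
  omega

end
end
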